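/- arXiv:1706.07994 — 6 statements merged into one kernel-verified Lean document; each statement's English description precedes it below -/
import Mathlib

section
/- For a semisimple Lie algebra with simple roots α_i and ℓ=2p divisible by all (α_i,α_i), the index of Λ^⊕ = √p Λ_R^∨ in its dual lattice (1/√p)Λ_W equals |Λ_W/Λ_R| · ∏_i (ℓ/(α_i,α_i)). -/
open scoped RealInnerProductSpace

/-!
Multiplication by `√p` maps `L = √p Λ_R^∨` onto the lattice `M` spanned by the vectors
`(2p / c_i) α_i`, which sits inside `Λ_R`, and maps the dual lattice `D` onto `Λ_W`.
Hence `[D : L] = [Λ_W : M] = [Λ_W : Λ_R] · [Λ_R : M]`, and since the `α_i` are a `ℤ`-basis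
of `Λ_R`, `[Λ_R : M] = ∏ 2p / c_i`.
-/

theorem AddSubgroup.relIndex_closure_range_zsmul {M : Type*} [AddCommGroup M]
    {ι : Type*} [Fintype ι] {b : ι → M} (hb : LinearIndependent ℤ b) (m : ι → ℤ) :
    (closure (Set.range fun i => m i • b i)).relIndex (closure (Set.range b)) =
      ∏ i, (m i).natAbs := by
  set f : (ι → ℤ) →+ M := (Fintype.linearCombination ℤ b).toAddMonoidHom
  have hf : ∀ v, f v = ∑ i, v i • b i := Fintype.linearCombination_apply ℤ b
  have hrange : closure (Set.range b) = (⊤ : AddSubgroup (ι → ℤ)).map f := by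
    ext x
    simp [mem_closure_range_iff_of_fintype, hf, eq_comm]
  have hmultiples : closure (Set.range fun i => m i • b i) =
      (pi Set.univ fun i => zmultiples (m i)).map f := by
    ext x
    simp only [mem_closure_range_iff_of_fintype, mem_map, mem_pi, Set.mem_univ,
      forall_const, mem_zmultiples_iff, hf]
    constructor
    · rintro ⟨a, rfl⟩
      exact ⟨fun i => a i * m i, fun i => ⟨a i, by rw [smul_eq_mul]⟩,
        Finset.sum_congr rfl fun i _ => mul_smul _ _ _⟩
    · rintro ⟨v, hv, rfl⟩
      choose a ha using hv
      exact ⟨a, Finset.sum_congr rfl fun i _ => by rw [← ha i, smul_eq_mul, mul_smul]⟩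
  rw [hrange, hmultiples,
    relIndex_map_map_of_injective _ _ hb.fintypeLinearCombination_injective,
    relIndex_top_right, index_pi]
  simp only [Int.index_zmultiples]

theorem AddSubgroup.closure_range_zsmul_le {M : Type*} [AddCommGroup M] {ι : Type*}
    (b : ι → M) (m : ι → ℤ) :
    closure (Set.range fun i => m i • b i) ≤ closure (Set.range b) := by
  rw [closure_le]
  rintro _ ⟨i, rfl⟩
  exact zsmul_mem (subset_closure (Set.mem_range_self i)) _

section InnerProductSpace

variable {V : Type*} [NormedAddCommGroup V] [InnerProductSpace ℝ V]

theorem forall_mem_closure_range_exists_int_inner_iff {ι : Type*} (v : ι → V) (x : V) :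
    (∀ y ∈ AddSubgroup.closure (Set.range v), ∃ n : ℤ, ⟪x, y⟫ = n) ↔
      ∀ i, ∃ n : ℤ, ⟪x, v i⟫ = n := by
  refine ⟨fun h i => h _ (AddSubgroup.subset_closure (Set.mem_range_self i)), fun h => ?_⟩
  let integral : AddSubgroup V :=
    (Int.castAddHom ℝ).range.comap (innerₛₗ ℝ x).toAddMonoidHom
  suffices AddSubgroup.closure (Set.range v) ≤ integral from
    fun y hy => (this hy).imp fun _ hn => hn.symm
  rw [AddSubgroup.closure_le]
  rintro _ ⟨i, rfl⟩
  exact (h i).imp fun _ hn => hn.symm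

theorem map_smul_eq_of_mem_dual_iff {ι : Type*} {s : ℝ} (hs : s ≠ 0) (w : ι → V)
    {D W : AddSubgroup V}
    (hD : ∀ x, x ∈ D ↔ ∀ y ∈ AddSubgroup.closure (Set.range fun i => s • w i),
      ∃ n : ℤ, ⟪x, y⟫ = n)
    (hW : ∀ x, x ∈ W ↔ ∀ i, ∃ n : ℤ, ⟪x, w i⟫ = n) :
    D.map (DistribSMul.toAddMonoidHom V s) = W := by
  have hsurj : Function.Surjective (DistribSMul.toAddMonoidHom V s) :=
    fun y => ⟨s⁻¹ • y, smul_inv_smul₀ hs y⟩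
  suffices D = W.comap (DistribSMul.toAddMonoidHom V s) by
    rw [this, AddSubgroup.map_comap_eq_self_of_surjective hsurj]
  ext x
  rw [hD, forall_mem_closure_range_exists_int_inner_iff, AddSubgroup.mem_comap, hW]
  simp only [DistribSMul.toAddMonoidHom_apply, real_inner_smul_left,
    real_inner_smul_right]

theorem closure_range_le_of_cartan {ι : Type*} {α : ι → V}
    (hcartan : ∀ i j, ∃ a : ℤ, 2 * ⟪α i, α j⟫ = a * ⟪α i, α i⟫) {W : AddSubgroup V}
    (hW : ∀ x, x ∈ W ↔ ∀ i, ∃ n : ℤ, ⟪x, (2 / ⟪α i, α i⟫) • α i⟫ = n) :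
    AddSubgroup.closure (Set.range α) ≤ W := by
  rw [AddSubgroup.closure_le]
  rintro _ ⟨j, rfl⟩
  refine (hW _).mpr fun i => ?_
  obtain ⟨a, ha⟩ := hcartan i j
  by_cases hi : ⟪α i, α i⟫ = 0
  · exact ⟨0, by rw [hi, div_zero, zero_smul, inner_zero_right, Int.cast_zero]⟩
  · refine ⟨a, ?_⟩
    rw [real_inner_smul_right, real_inner_comm (α i) (α j), div_mul_eq_mul_div, ha,
      mul_div_cancel_right₀ _ hi]

end InnerProductSpace

theorem sqrt_mul_sqrt_mul_two_div_eq_cast {p c : ℕ} (hc : c ∣ 2 * p) :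
    √p * √p * (2 / c) = ((2 * p / c : ℕ) : ℝ) := by
  rw [Real.mul_self_sqrt p.cast_nonneg, Nat.cast_div_charZero hc]
  push_cast
  ring

theorem stmt_5_general {V : Type*} [NormedAddCommGroup V] [InnerProductSpace ℝ V]
    {ι : Type*} [Fintype ι] (α : ι → V) (p : ℕ) (hp : 0 < p)
    (c : ι → ℕ) (hc : ∀ i, ⟪α i, α i⟫ = c i)
    (hdvd : ∀ i, c i ∣ 2 * p)
    (hcartan : ∀ i j, ∃ a : ℤ, 2 * ⟪α i, α j⟫ = a * ⟪α i, α i⟫)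
    (hlin : LinearIndependent ℝ α)
    (W R L D : AddSubgroup V)
    (hR : R = AddSubgroup.closure (Set.range α))
    (hW : ∀ x, x ∈ W ↔ ∀ i, ∃ n : ℤ, ⟪x, (2 / ⟪α i, α i⟫) • α i⟫ = n)
    (hL : L = AddSubgroup.closure
        (Set.range fun i => Real.sqrt p • ((2 / ⟪α i, α i⟫) • α i)))
    (hD : ∀ x, x ∈ D ↔ ∀ y ∈ L, ∃ n : ℤ, ⟪x, y⟫ = n) :
    (L.addSubgroupOf D).index = (R.addSubgroupOf W).index * ∏ i, (2 * p / c i) := by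
  set s : ℝ := √p
  have hs : s ≠ 0 := Real.sqrt_ne_zero'.mpr (Nat.cast_pos.mpr hp)
  set f : V →+ V := DistribSMul.toAddMonoidHom V s
  set M := AddSubgroup.closure (Set.range fun i => ((2 * p / c i : ℕ) : ℤ) • α i)
  have hLM : L.map f = M := by
    rw [hL, AddMonoidHom.map_closure, ← Set.range_comp]
    congr 2 with i
    rw [Function.comp_apply, DistribSMul.toAddMonoidHom_apply, smul_smul, smul_smul, hc i,
      sqrt_mul_sqrt_mul_two_div_eq_cast (hdvd i), natCast_zsmul, Nat.cast_smul_eq_nsmul]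
  have hDW : D.map f = W := map_smul_eq_of_mem_dual_iff hs _ (hL ▸ hD) hW
  have hMR : M ≤ R := hR ▸ AddSubgroup.closure_range_zsmul_le _ _
  have hRW : R ≤ W := hR ▸ closure_range_le_of_cartan hcartan hW
  calc (L.addSubgroupOf D).index = M.relIndex W := by
        rw [← hLM, ← hDW,
          AddSubgroup.relIndex_map_map_of_injective _ _ (smul_right_injective V hs)]
        rfl
    _ = R.relIndex W * M.relIndex R := by
        rw [mul_comm, AddSubgroup.relIndex_mul_relIndex M R W hMR hRW]
    _ = (R.addSubgroupOf W).index * ∏ i, (2 * p / c i) := by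
        rw [hR, AddSubgroup.relIndex_closure_range_zsmul (hlin.restrict_scalars' ℤ)]
        simp only [Int.natAbs_natCast]
        rfl

/-- For a semisimple Lie algebra with simple roots `α i` (spanning, linearly independent,
with integral inner products and Cartan integers) and `ℓ = 2p` divisible by all `(α i, α i)`,
the index of `Λ^⊕ = √p Λ_R^∨` in its dual lattice `(1/√p)Λ_W` equals
`|Λ_W/Λ_R| · ∏_i (ℓ/(α i, α i))`. Here `R` is the root lattice, `W` the weight lattice,
`L = Λ^⊕` and `D` its dual lattice. -/
theorem stmt_5 {V : Type*} [NormedAddCommGroup V] [InnerProductSpace ℝ V]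
    {ι : Type*} [Fintype ι] (α : ι → V) (p : ℕ) (hp : 0 < p)
    (c : ι → ℕ) (hcpos : ∀ i, 0 < c i) (hc : ∀ i, ⟪α i, α i⟫ = c i)
    (hdvd : ∀ i, c i ∣ 2 * p)
    (hint : ∀ i j, ∃ n : ℤ, ⟪α i, α j⟫ = n)
    (hcartan : ∀ i j, ∃ a : ℤ, 2 * ⟪α i, α j⟫ = a * ⟪α i, α i⟫)
    (hlin : LinearIndependent ℝ α)
    (hspan : Submodule.span ℝ (Set.range α) = ⊤)
    (W R L D : AddSubgroup V)
    (hR : R = AddSubgroup.closure (Set.range α))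
    (hW : ∀ x, x ∈ W ↔ ∀ i, ∃ n : ℤ, ⟪x, (2 / ⟪α i, α i⟫) • α i⟫ = n)
    (hL : L = AddSubgroup.closure
        (Set.range fun i => Real.sqrt p • ((2 / ⟪α i, α i⟫) • α i)))
    (hD : ∀ x, x ∈ D ↔ ∀ y ∈ L, ∃ n : ℤ, ⟪x, y⟫ = n) :
    (L.addSubgroupOf D).index = (R.addSubgroupOf W).index * ∏ i, (2 * p / c i) :=
  stmt_5_general α p hp c hc hdvd hcartan hlin W R L D hR hW hL hD
end

section
/- For B_n with ℓ=4 (p=2), the vector Q = (1/√2)(2ρ^∨ − ρ) equals (1/(2√2)) Σ_{j=1}^n j·α_j, and (Q,Q) = n/4, so the central charge c = n − 12(Q,Q) = −2n. -/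
/-!
Put `S = ∑ j, (j + 1) α_j`. The Gram matrix of `B_n` is tridiagonal, and summing its `i`-th row
against the weights `j + 1` gives `(α_i, S) = 2 δ_{i, n-1}`. The same numbers, halved, are
`(α_i, 2ρ∨ - ρ) = 2 - (α_i, α_i) / 2`; as both vectors lie in the span of the roots, on which the
inner product is definite, `2ρ∨ - ρ = S / 2`. Finally `(S, S) = ∑ j, (j + 1) (α_j, S) = 2n`.
-/

open scoped RealInnerProductSpace
open Finset

theorem Submodule.eq_of_mem_span_of_forall_inner_eq {𝕜 E ι : Type*} [RCLike 𝕜]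
    [NormedAddCommGroup E] [InnerProductSpace 𝕜 E] {v : ι → E} {x y : E}
    (hx : x ∈ span 𝕜 (Set.range v)) (hy : y ∈ span 𝕜 (Set.range v))
    (h : ∀ i, inner 𝕜 (v i) x = inner 𝕜 (v i) y) : x = y := by
  have hperp : span 𝕜 (Set.range v) ≤ (𝕜 ∙ (x - y))ᗮ :=
    span_le.2 <| Set.range_subset_iff.2 fun i =>
      mem_orthogonal_singleton_iff_inner_left.2 <| by rw [inner_sub_right, h, sub_self]
  exact sub_eq_zero.1 <| inner_self_eq_zero.1 <|
    mem_orthogonal_singleton_iff_inner_left.1 (hperp (sub_mem hx hy))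

/-- The Gram matrix `(α_i, α_j)` of the simple roots of `B_n`, indexed from `0` with the short
root last. -/
def typeBGram (n i j : ℕ) : ℝ :=
  (if j = i then (if i = n - 1 then 2 else 4) else 0) - (if j = i + 1 then 2 else 0)
    - (if i = j + 1 then 2 else 0)

theorem sum_range_succ_mul_typeBGram {n i : ℕ} (hi : i < n) :
    ∑ j ∈ range n, ((j : ℝ) + 1) * typeBGram n i j = if i = n - 1 then 2 else 0 := by
  simp only [typeBGram, mul_sub, mul_ite, mul_zero, sum_sub_distrib, sum_ite_eq', mem_range, hi]
  have hlow : ∑ j ∈ range n, (if i = j + 1 then ((j : ℝ) + 1) * 2 else 0) = i * 2 := by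
    rcases i with _ | k
    · simp
    · simp [show k < n by omega]
  rw [hlow, if_pos trivial]
  split_ifs <;> first | omega | (push_cast; ring)

section

variable {V : Type*} [NormedAddCommGroup V] [InnerProductSpace ℝ V] {n : ℕ} {α : Fin n → V}

theorem inner_eq_typeBGram (hdiag : ∀ i : Fin n, ⟪α i, α i⟫ = if i.val = n - 1 then 2 else 4)
    (hadj : ∀ i j : Fin n, j.val = i.val + 1 → ⟪α i, α j⟫ = -2)
    (hfar : ∀ i j : Fin n, i.val + 1 < j.val → ⟪α i, α j⟫ = 0) (i j : Fin n) :
    ⟪α i, α j⟫ = typeBGram n i j := by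
  unfold typeBGram
  obtain h | h | h | h | h : i.val + 1 < j ∨ j.val = i + 1 ∨ i.val = j ∨ i.val = j + 1 ∨
      j.val + 1 < i := by omega
  · rw [hfar i j h]; split_ifs <;> first | omega | norm_num
  · rw [hadj i j h]; split_ifs <;> first | omega | norm_num
  · rw [Fin.ext h, hdiag j]; split_ifs <;> first | omega | norm_num
  · rw [real_inner_comm, hadj j i h]; split_ifs <;> first | omega | norm_num
  · rw [real_inner_comm, hfar j i h]; split_ifs <;> first | omega | norm_num

theorem inner_sum_succ_smul (hα : ∀ i j, ⟪α i, α j⟫ = typeBGram n i j) (i : Fin n) :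
    ⟪α i, ∑ j, ((j.val : ℝ) + 1) • α j⟫ = if (i : ℕ) = n - 1 then 2 else 0 := by
  simp only [inner_sum, inner_smul_right, hα,
    Fin.sum_univ_eq_sum_range (fun j => ((j : ℝ) + 1) * typeBGram n i j)]
  exact sum_range_succ_mul_typeBGram i.isLt

theorem inner_self_sum_succ_smul (hα : ∀ i j, ⟪α i, α j⟫ = typeBGram n i j) :
    ⟪∑ j, ((j.val : ℝ) + 1) • α j, ∑ j, ((j.val : ℝ) + 1) • α j⟫ = 2 * n := by
  conv_lhs => rw [sum_inner]
  simp only [real_inner_smul_left, inner_sum_succ_smul hα, mul_ite, mul_zero,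
    Fin.sum_univ_eq_sum_range (fun j => if j = n - 1 then ((j : ℝ) + 1) * 2 else 0),
    sum_ite_eq', mem_range]
  split_ifs with h
  · rw [Nat.cast_pred (by omega)]; ring
  · simp [show n = 0 by omega]

end

theorem stmt_7_general {V : Type*} [NormedAddCommGroup V] [InnerProductSpace ℝ V]
    (n : ℕ) (α : Fin n → V) (ρ ρv : V)
    (hdiag : ∀ i : Fin n, ⟪α i, α i⟫ = if i.val = n - 1 then 2 else 4)
    (hadj : ∀ i j : Fin n, j.val = i.val + 1 → ⟪α i, α j⟫ = -2)
    (hfar : ∀ i j : Fin n, i.val + 1 < j.val → ⟪α i, α j⟫ = 0)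
    (hρ : ∀ i, ⟪α i, ρ⟫ = ⟪α i, α i⟫ / 2)
    (hρv : ∀ i, ⟪α i, ρv⟫ = 1)
    (hρmem : ρ ∈ Submodule.span ℝ (Set.range α))
    (hρvmem : ρv ∈ Submodule.span ℝ (Set.range α)) :
    (Real.sqrt 2)⁻¹ • ((2:ℝ) • ρv - ρ)
        = (1/(2 * Real.sqrt 2)) • ∑ j : Fin n, ((j.val : ℝ) + 1) • α j
    ∧ ⟪(1/(2 * Real.sqrt 2)) • ∑ j : Fin n, ((j.val : ℝ) + 1) • α j,
        (1/(2 * Real.sqrt 2)) • ∑ j : Fin n, ((j.val : ℝ) + 1) • α j⟫ = n / 4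
    ∧ (n : ℝ) - 12 * ((n : ℝ) / 4) = -2 * n := by
  have hα := inner_eq_typeBGram hdiag hadj hfar
  set S := ∑ j : Fin n, ((j.val : ℝ) + 1) • α j with hS
  have hSmem : S ∈ Submodule.span ℝ (Set.range α) :=
    Submodule.sum_mem _ fun j _ => Submodule.smul_mem _ _ (Submodule.subset_span ⟨j, rfl⟩)
  have hQ : (2 : ℝ) • ρv - ρ = (1 / 2 : ℝ) • S := by
    refine Submodule.eq_of_mem_span_of_forall_inner_eq
      (sub_mem (Submodule.smul_mem _ _ hρvmem) hρmem) (Submodule.smul_mem _ _ hSmem) fun i => ?_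
    rw [inner_sub_right, inner_smul_right, inner_smul_right, hρ, hρv, hS,
      inner_sum_succ_smul hα, hdiag]
    split_ifs <;> norm_num
  refine ⟨?_, ?_, by ring⟩
  · rw [hQ, smul_smul]
    congr 1
    field_simp
  · rw [real_inner_smul_left, real_inner_smul_right, hS, inner_self_sum_succ_smul hα]
    field_simp
    rw [Real.sq_sqrt zero_le_two]
    ring

/-- For `B_n` with `ℓ = 4` (`p = 2`): with simple roots `α 0, …, α (n-1)` (standard `B_n`
inner products, `α (n-1)` the short root), `ρ` the half-sum of positive roots and `ρ∨` the
half-sum of positive coroots (characterized by `(α i, ρ) = (α i, α i)/2`, `(α i, ρ∨) = 1`,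
both lying in the span of the roots), the vector `Q = (1/√2)(2ρ∨ − ρ)` equals
`(1/(2√2)) Σ_{j=1}^n j·α_j`, and `(Q,Q) = n/4`, so the central charge
`c = n − 12(Q,Q) = −2n`. -/
theorem stmt_7 {V : Type*} [NormedAddCommGroup V] [InnerProductSpace ℝ V]
    (n : ℕ) (hn : 0 < n) (α : Fin n → V) (ρ ρv : V)
    (hdiag : ∀ i : Fin n, ⟪α i, α i⟫ = if i.val = n - 1 then 2 else 4)
    (hadj : ∀ i j : Fin n, j.val = i.val + 1 → ⟪α i, α j⟫ = -2)
    (hfar : ∀ i j : Fin n, i.val + 1 < j.val → ⟪α i, α j⟫ = 0)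
    (hρ : ∀ i, ⟪α i, ρ⟫ = ⟪α i, α i⟫ / 2)
    (hρv : ∀ i, ⟪α i, ρv⟫ = 1)
    (hρmem : ρ ∈ Submodule.span ℝ (Set.range α))
    (hρvmem : ρv ∈ Submodule.span ℝ (Set.range α)) :
    (Real.sqrt 2)⁻¹ • ((2:ℝ) • ρv - ρ)
        = (1/(2 * Real.sqrt 2)) • ∑ j : Fin n, ((j.val : ℝ) + 1) • α j
    ∧ ⟪(1/(2 * Real.sqrt 2)) • ∑ j : Fin n, ((j.val : ℝ) + 1) • α j,
        (1/(2 * Real.sqrt 2)) • ∑ j : Fin n, ((j.val : ℝ) + 1) • α j⟫ = n / 4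
    ∧ (n : ℝ) - 12 * ((n : ℝ) / 4) = -2 * n :=
  stmt_7_general n α ρ ρv hdiag hadj hfar hρ hρv hρmem hρvmem
end

section
/- For B_n, p=2, the groundstates of the Steinberg module [Q + α_n/√2] have conformal dimension −n/8 + 1/2 and there are exactly 2n of them, given by Q ± α_{k…n}^⊖ for k=1,…,n, where α_{k…n}^⊖ = (Σ_{i=k}^n α_i)/√2. -/
/-!
In the orthonormal coordinates `ε_k = α^⊖_{k…n}` one has `α_i = √2 (ε_i - ε_{i+1})`,
`α_n = √2 ε_n` and `Q = ½ Σ ε_k`. Hence `Λ^⊕`, spanned by the `√2 α_i^∨`, is the `D_n` lattice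
`{Σ c_k ε_k | Σ c_k even}`, and the coset `[Q + α_n/√2]` is `Q + {Σ c_k ε_k | Σ c_k odd}`.
On it `h(Q + Σ c_k ε_k) = ½ Σ c_k² - n/8`, and an odd coordinate sum forces
`Σ c_k² ≥ Σ |c_k| ≥ 1`, with equality exactly when `c` is a signed unit vector.
-/

open scoped RealInnerProductSpace
open Finset

section EvenSum

variable {ι : Type*} [Fintype ι]

variable (ι) in
def evenSumSubmodule : Submodule ℤ (ι → ℤ) where
  carrier := {c | Even (∑ i, c i)}
  add_mem' {c d} hc hd := by
    simpa only [Set.mem_ofPred_eq, Pi.add_apply, sum_add_distrib] using hc.add hd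
  zero_mem' := by simp
  smul_mem' a c hc := by
    simpa only [Set.mem_ofPred_eq, Pi.smul_apply, smul_eq_mul, ← mul_sum] using hc.mul_left a

@[simp]
lemma mem_evenSumSubmodule {c : ι → ℤ} : c ∈ evenSumSubmodule ι ↔ Even (∑ i, c i) := Iff.rfl

lemma one_le_sum_sq_of_odd_sum {c : ι → ℤ} (hc : Odd (∑ i, c i)) : 1 ≤ ∑ i, c i ^ 2 :=
  calc (1 : ℤ) ≤ |∑ i, c i| := Int.one_le_abs fun h => by simp [h] at hc
    _ ≤ ∑ i, |c i| := abs_sum_le_sum_abs _ _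
    _ ≤ ∑ i, c i ^ 2 := sum_le_sum fun i _ => by
        simpa only [Int.natCast_natAbs] using Int.natAbs_le_self_sq (c i)

lemma exists_eq_single_of_sum_sq_eq_one [DecidableEq ι] {c : ι → ℤ} (hc : ∑ i, c i ^ 2 = 1) :
    ∃ k, c = Pi.single k 1 ∨ c = Pi.single k (-1) := by
  obtain ⟨k, hk⟩ : ∃ k, c k ≠ 0 := by
    by_contra! h
    simp [h] at hc
  have hk_sq : c k ^ 2 = 1 := by
    have := single_le_sum (fun i _ => sq_nonneg (c i)) (mem_univ k)
    have := Int.one_le_abs hk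
    nlinarith [sq_abs (c k)]
  have hrest : ∀ i ∈ univ.erase k, c i ^ 2 = 0 := by
    refine (sum_eq_zero_iff_of_nonneg fun i _ => sq_nonneg (c i)).1 ?_
    rw [← add_sum_erase _ _ (mem_univ k)] at hc
    linarith
  have hc_eq : c = Pi.single k (c k) := by
    ext i
    by_cases hi : i = k
    · subst hi; simp
    · simpa [hi] using hrest i (mem_erase.2 ⟨hi, mem_univ i⟩)
  obtain h | h := sq_eq_one_iff.1 hk_sq
  · exact ⟨k, .inl (h ▸ hc_eq)⟩
  · exact ⟨k, .inr (h ▸ hc_eq)⟩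

variable {V : Type*} [AddCommGroup V]

lemma sub_mem_map_evenSumSubmodule_iff [DecidableEq ι] (ε : ι → V) (k : ι) (x : V) :
    x - ε k ∈ (evenSumSubmodule ι).map (Fintype.linearCombination ℤ ε) ↔
      ∃ c : ι → ℤ, Odd (∑ i, c i) ∧ Fintype.linearCombination ℤ ε c = x := by
  constructor
  · rintro ⟨c, hc, hcx⟩
    refine ⟨c + Pi.single k 1, ?_, ?_⟩
    · simpa [sum_add_distrib] using (mem_evenSumSubmodule.1 hc).add_one
    · simp [hcx]
  · rintro ⟨c, hc, rfl⟩
    refine ⟨c - Pi.single k 1, ?_, by simp⟩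
    simpa [sum_sub_distrib] using hc.sub_odd odd_one

lemma span_eq_map_evenSumSubmodule {m : ℕ} (ε g : Fin (m + 1) → V)
    (hg_last : g (Fin.last m) = (2 : ℤ) • ε (Fin.last m))
    (hg : ∀ i : Fin m, g i.castSucc = ε i.castSucc - ε i.succ) :
    Submodule.span ℤ (Set.range g) =
      (evenSumSubmodule _).map (Fintype.linearCombination ℤ ε) := by
  apply le_antisymm
  · rw [Submodule.span_le, Set.range_subset_iff]
    refine Fin.lastCases ?_ fun i => ?_
    · exact ⟨Pi.single (Fin.last m) 2, by simp, by simp [hg_last]⟩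
    · refine ⟨Pi.single i.castSucc 1 - Pi.single i.succ 1, ?_, by simp [hg]⟩
      simp [sum_sub_distrib]
  · rintro _ ⟨c, ⟨s, hs⟩, rfl⟩
    have hsub : ∀ k, ε k - ε (Fin.last m) ∈ Submodule.span ℤ (Set.range g) := by
      refine Fin.reverseInduction (by simp) fun i hi => ?_
      have := add_mem (Submodule.subset_span (Set.mem_range_self i.castSucc)) hi
      rwa [hg, sub_add_sub_cancel] at this
    have hc : Fintype.linearCombination ℤ ε c
        = ∑ k, c k • (ε k - ε (Fin.last m)) + s • g (Fin.last m) := by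
      simp only [Fintype.linearCombination_apply, smul_sub, sum_sub_distrib, hg_last, ← sum_smul,
        hs]
      module
    rw [hc]
    exact add_mem (sum_mem fun k _ => Submodule.smul_mem _ _ (hsub k))
      (Submodule.smul_mem _ _ (Submodule.subset_span (Set.mem_range_self _)))

end EvenSum

section Groundstates

variable {ι V : Type*} [Fintype ι] [NormedAddCommGroup V] [InnerProductSpace ℝ V]
  {ε : ι → V}

def oddCoset (ε : ι → V) (Q : V) : Set V :=
  {μ | ∃ c : ι → ℤ, Odd (∑ i, c i) ∧ Fintype.linearCombination ℤ ε c = μ - Q}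

lemma Orthonormal.inner_self_linearCombination_int (hε : Orthonormal ℝ ε) (c : ι → ℤ) :
    ⟪Fintype.linearCombination ℤ ε c, Fintype.linearCombination ℤ ε c⟫
      = ((∑ i, c i ^ 2 : ℤ) : ℝ) := by
  simp only [Fintype.linearCombination_apply, ← Int.cast_smul_eq_zsmul ℝ, hε.inner_sum,
    conj_trivial]
  push_cast
  simp only [sq]

lemma Orthonormal.one_le_inner_of_mem_oddCoset (hε : Orthonormal ℝ ε) {Q μ : V}
    (hμ : μ ∈ oddCoset ε Q) : 1 ≤ ⟪μ - Q, μ - Q⟫ := by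
  obtain ⟨c, hc, hcμ⟩ := hμ
  rw [← hcμ, hε.inner_self_linearCombination_int]
  exact_mod_cast one_le_sum_sq_of_odd_sum hc

lemma Orthonormal.setOf_mem_oddCoset_inner_eq_one [DecidableEq ι] (hε : Orthonormal ℝ ε) (Q : V) :
    {μ ∈ oddCoset ε Q | ⟪μ - Q, μ - Q⟫ = 1} = {μ | ∃ k, μ = Q + ε k ∨ μ = Q - ε k} := by
  ext μ
  constructor
  · rintro ⟨⟨c, -, hc⟩, hμ⟩
    rw [← hc, hε.inner_self_linearCombination_int] at hμ
    obtain ⟨k, rfl | rfl⟩ := exists_eq_single_of_sum_sq_eq_one (by exact_mod_cast hμ)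
    · exact ⟨k, .inl (eq_sub_iff_add_eq'.1 (by simpa using hc)).symm⟩
    · exact ⟨k, .inr (sub_eq_add_neg Q _ ▸ (eq_sub_iff_add_eq'.1 (by simpa using hc)).symm)⟩
  · rintro ⟨k, rfl | rfl⟩
    · exact ⟨⟨Pi.single k 1, by simp, by simp⟩, by simp [hε.1 k]⟩
    · exact ⟨⟨Pi.single k (-1), by simp, by simp⟩, by simp [hε.1 k]⟩

lemma Orthonormal.ncard_setOf_add_or_sub (hε : Orthonormal ℝ ε) (Q : V) :
    {μ | ∃ k, μ = Q + ε k ∨ μ = Q - ε k}.ncard = 2 * Fintype.card ι := by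
  have hrange : {μ | ∃ k, μ = Q + ε k ∨ μ = Q - ε k}
      = Set.range (Sum.elim (fun k => Q + ε k) (fun k => Q - ε k)) := by
    ext μ
    simp [eq_comm, exists_or]
  have hinj : Function.Injective (Sum.elim (fun k => Q + ε k) (fun k => Q - ε k)) := by
    refine (add_right_injective Q).comp hε.linearIndependent.injective |>.sumElim
      ((sub_right_injective).comp hε.linearIndependent.injective) fun a b hab => ?_
    classical
    simp only [Function.comp_apply] at hab
    have h0 := congrArg (⟪ε a, ·⟫) (show ε a + ε b = 0 by linear_combination (norm := module) hab)
    have hab' := orthonormal_iff_ite.1 hε a b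
    simp only [inner_add_right, inner_zero_right, real_inner_self_eq_norm_sq, hε.1 a] at h0
    split_ifs at hab' <;> linarith
  rw [hrange, Set.ncard_range_of_injective hinj, Nat.card_sum, Nat.card_eq_fintype_card]
  ring

end Groundstates

namespace TypeB

section Module

variable {V : Type*} [AddCommGroup V] {m : ℕ}

def tailSum (α : Fin (m + 1) → V) (k : Fin (m + 1)) : V :=
  ∑ i ∈ univ.filter (fun i : Fin (m + 1) => k ≤ i), α i

lemma tailSum_last (α : Fin (m + 1) → V) : tailSum α (Fin.last m) = α (Fin.last m) := by
  simp [tailSum, Fin.last_le_iff, filter_eq']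

lemma tailSum_castSucc (α : Fin (m + 1) → V) (i : Fin m) :
    tailSum α i.castSucc = α i.castSucc + tailSum α i.succ := by
  rw [tailSum, tailSum, ← sum_insert (by simp)]
  congr 1
  ext j
  simp [le_iff_eq_or_lt, Fin.castSucc_lt_iff_succ_le, eq_comm]

variable [Module ℝ V]

noncomputable def eps (α : Fin (m + 1) → V) (k : Fin (m + 1)) : V :=
  (√2)⁻¹ • tailSum α k

lemma tailSum_eq_smul_eps (α : Fin (m + 1) → V) (k : Fin (m + 1)) :
    tailSum α k = √2 • eps α k := by
  rw [eps, smul_inv_smul₀ (by positivity)]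

lemma eq_smul_eps_last (α : Fin (m + 1) → V) : α (Fin.last m) = √2 • eps α (Fin.last m) := by
  rw [← tailSum_eq_smul_eps, tailSum_last]

lemma eq_smul_eps_sub (α : Fin (m + 1) → V) (i : Fin m) :
    α i.castSucc = √2 • (eps α i.castSucc - eps α i.succ) := by
  rw [smul_sub, ← tailSum_eq_smul_eps, ← tailSum_eq_smul_eps, tailSum_castSucc,
    add_sub_cancel_right]

lemma sum_tailSum (α : Fin (m + 1) → V) :
    ∑ k, tailSum α k = ∑ j : Fin (m + 1), ((j.val : ℝ) + 1) • α j := by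
  simp only [tailSum, sum_filter]
  rw [sum_comm]
  refine sum_congr rfl fun j _ => ?_
  rw [← sum_filter, sum_const, filter_ge_eq_Iic, Fin.card_Iic, ← Nat.cast_smul_eq_nsmul ℝ]
  push_cast
  rfl

lemma weylVector_eq (α : Fin (m + 1) → V) :
    (1 / (2 * √2)) • ∑ j : Fin (m + 1), ((j.val : ℝ) + 1) • α j =
      ∑ k, (1 / 2 : ℝ) • eps α k := by
  rw [← sum_tailSum, smul_sum]
  refine sum_congr rfl fun k _ => ?_
  rw [tailSum_eq_smul_eps, smul_smul]
  congr 1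
  field_simp

end Module

variable {V : Type*} [NormedAddCommGroup V] [InnerProductSpace ℝ V] {m : ℕ}
  {α : Fin (m + 1) → V}

/-- The simple roots of `B_{m+1}`, scaled so that `α i = √2 (ε i - ε (i+1))` and
`α (last m) = √2 ε (last m)` for an orthonormal family `ε` (see `eq_smul_eps_sub`). -/
structure IsSimpleRoots (α : Fin (m + 1) → V) : Prop where
  inner_self : ∀ i, ⟪α i, α i⟫ = if i = Fin.last m then 2 else 4
  inner_adj : ∀ i j : Fin (m + 1), j.val = i.val + 1 → ⟪α i, α j⟫ = -2
  inner_far : ∀ i j : Fin (m + 1), i.val + 1 < j.val → ⟪α i, α j⟫ = 0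

lemma IsSimpleRoots.inner_tailSum_succ (hα : IsSimpleRoots α) (i : Fin m) :
    ⟪tailSum α i.succ, α i.castSucc⟫ = -2 := by
  rw [tailSum, sum_inner, sum_eq_single_of_mem i.succ (by simp)]
  · rw [real_inner_comm]
    exact hα.inner_adj _ _ (by simp)
  · intro j hj hne
    rw [real_inner_comm]
    refine hα.inner_far _ _ ?_
    simp only [mem_filter, mem_univ, true_and, Fin.le_def, ne_eq, Fin.ext_iff] at hj hne
    simp only [Fin.val_castSucc, Fin.val_succ] at hj hne ⊢
    omega

lemma IsSimpleRoots.inner_tailSum_of_le (hα : IsSimpleRoots α) {k j : Fin (m + 1)}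
    (hkj : k ≤ j) : ⟪tailSum α k, α j⟫ = if k = j then 2 else 0 := by
  induction k using Fin.reverseInduction with
  | last =>
    obtain rfl := Fin.last_le_iff.1 hkj
    rw [tailSum_last, hα.inner_self, if_pos rfl, if_pos rfl]
  | cast i ih =>
    rw [tailSum_castSucc, inner_add_left]
    rcases hkj.eq_or_lt with rfl | hlt
    · rw [hα.inner_self, hα.inner_tailSum_succ]
      rw [if_neg (Fin.castSucc_ne_last i), if_pos rfl]
      norm_num
    · rw [Fin.castSucc_lt_iff_succ_le] at hlt
      rw [ih hlt, if_neg (Fin.castSucc_lt_succ.trans_le hlt).ne]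
      rcases hlt.eq_or_lt with rfl | hlt'
      · rw [hα.inner_adj _ _ (by simp)]
        norm_num
      · rw [hα.inner_far _ _ (by simpa [Fin.lt_def] using hlt'), if_neg hlt'.ne]
        norm_num

lemma IsSimpleRoots.inner_tailSum_tailSum (hα : IsSimpleRoots α) (k l : Fin (m + 1)) :
    ⟪tailSum α k, tailSum α l⟫ = if k = l then 2 else 0 := by
  wlog hkl : k ≤ l generalizing k l
  · rw [real_inner_comm, this l k (le_of_not_ge hkl)]
    simp [eq_comm]
  calc ⟪tailSum α k, tailSum α l⟫
      = ∑ j ∈ univ.filter (fun j : Fin (m + 1) => l ≤ j), if k = j then 2 else 0 := by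
        refine (inner_sum _ _ _).trans ?_
        exact sum_congr rfl fun j hj => hα.inner_tailSum_of_le (hkl.trans (mem_filter.1 hj).2)
    _ = if k = l then 2 else 0 := by
        rw [sum_ite_eq]
        simp [le_antisymm_iff, hkl]

lemma IsSimpleRoots.orthonormal_eps (hα : IsSimpleRoots α) : Orthonormal ℝ (eps α) := by
  rw [orthonormal_iff_ite]
  intro k l
  rw [eps, eps, real_inner_smul_left, real_inner_smul_right, hα.inner_tailSum_tailSum]
  split_ifs
  · field_simp
    norm_num
  · simp

lemma IsSimpleRoots.span_coroots_eq (hα : IsSimpleRoots α) :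
    Submodule.span ℤ (Set.range fun i => √2 • ((2 / ⟪α i, α i⟫) • α i)) =
      (evenSumSubmodule _).map (Fintype.linearCombination ℤ (eps α)) := by
  have hs : √2 * √2 = 2 := Real.mul_self_sqrt zero_le_two
  refine span_eq_map_evenSumSubmodule _ _ ?_ fun i => ?_
  · rw [hα.inner_self, if_pos rfl, eq_smul_eps_last α, smul_smul, smul_smul,
      show √2 * (2 / 2) * √2 = 2 by linear_combination hs, ← Int.cast_smul_eq_zsmul ℝ]
    norm_num
  · rw [hα.inner_self, if_neg (Fin.castSucc_ne_last i), eq_smul_eps_sub α, smul_smul, smul_smul]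
    rw [show √2 * (2 / 4) * √2 = 1 by linear_combination hs / 2, one_smul]

lemma IsSimpleRoots.inner_weylVector_self (hα : IsSimpleRoots α) :
    ⟪(1 / (2 * √2)) • ∑ j : Fin (m + 1), ((j.val : ℝ) + 1) • α j,
      (1 / (2 * √2)) • ∑ j : Fin (m + 1), ((j.val : ℝ) + 1) • α j⟫ = ((m : ℝ) + 1) / 4 := by
  rw [weylVector_eq, hα.orthonormal_eps.inner_sum]
  simp only [conj_trivial, sum_const, card_univ, Fintype.card_fin, nsmul_eq_mul]
  push_cast
  ring

end TypeB

theorem stmt_10_general {V : Type*} [NormedAddCommGroup V] [InnerProductSpace ℝ V]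
    (n : ℕ) (hn : 0 < n) (α : Fin n → V)
    (hdiag : ∀ i : Fin n, ⟪α i, α i⟫ = if i.val = n - 1 then 2 else 4)
    (hadj : ∀ i j : Fin n, j.val = i.val + 1 → ⟪α i, α j⟫ = -2)
    (hfar : ∀ i j : Fin n, i.val + 1 < j.val → ⟪α i, α j⟫ = 0) :
    let Q : V := (1/(2 * Real.sqrt 2)) • ∑ j : Fin n, ((j.val : ℝ) + 1) • α j
    let e : Fin n → V := fun k =>
      (Real.sqrt 2)⁻¹ • ∑ i ∈ Finset.univ.filter (fun i : Fin n => k ≤ i), α i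
    let L : Submodule ℤ V := Submodule.span ℤ
      (Set.range fun i => Real.sqrt 2 • ((2 / ⟪α i, α i⟫) • α i))
    let h : V → ℝ := fun μ => 1/2 * ⟪μ - Q, μ - Q⟫ - 1/2 * ⟪Q, Q⟫
    let C : Set V := {μ | μ - (Q + (Real.sqrt 2)⁻¹ • α ⟨n - 1, Nat.sub_lt hn Nat.one_pos⟩) ∈ L}
    (∀ k, (Q + e k ∈ C) ∧ (Q - e k ∈ C)
        ∧ h (Q + e k) = -((n : ℝ)/8) + 1/2 ∧ h (Q - e k) = -((n : ℝ)/8) + 1/2)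
    ∧ (∀ μ ∈ C, -((n : ℝ)/8) + 1/2 ≤ h μ)
    ∧ {μ ∈ C | h μ = -((n : ℝ)/8) + 1/2} = {μ | ∃ k, μ = Q + e k ∨ μ = Q - e k}
    ∧ Set.ncard {μ ∈ C | h μ = -((n : ℝ)/8) + 1/2} = 2 * n := by
  obtain ⟨m, rfl⟩ : ∃ m, n = m + 1 := ⟨n - 1, by omega⟩
  intro Q e L h C
  have hα : TypeB.IsSimpleRoots α := ⟨fun i => by simpa [Fin.ext_iff] using hdiag i, hadj, hfar⟩
  have hε : Orthonormal ℝ e := hα.orthonormal_eps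
  have hlast : (√2)⁻¹ • α ⟨m + 1 - 1, Nat.sub_lt hn Nat.one_pos⟩ = e (Fin.last m) :=
    (inv_smul_eq_iff₀ (by positivity)).2 (TypeB.eq_smul_eps_last α)
  have hL : L = (evenSumSubmodule _).map (Fintype.linearCombination ℤ e) := hα.span_coroots_eq
  have hC : C = oddCoset e Q := by
    ext μ
    change _ ∈ L ↔ ∃ c, _
    rw [hlast, ← sub_sub, hL, sub_mem_map_evenSumSubmodule_iff]
  have hQQ : ⟪Q, Q⟫ = ((m : ℝ) + 1) / 4 := hα.inner_weylVector_self
  have hh : ∀ μ, h μ = 1 / 2 * ⟪μ - Q, μ - Q⟫ - ((m : ℝ) + 1) / 8 := fun μ => by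
    change 1 / 2 * _ - 1 / 2 * ⟪Q, Q⟫ = _
    rw [hQQ]
    ring
  have hground : {μ ∈ C | h μ = -(((m + 1 : ℕ) : ℝ) / 8) + 1 / 2}
      = {μ | ∃ k, μ = Q + e k ∨ μ = Q - e k} := by
    rw [← hε.setOf_mem_oddCoset_inner_eq_one, hC]
    ext μ
    simp only [Set.mem_ofPred_eq, hh]
    push_cast
    constructor <;> rintro ⟨hμ, hμh⟩ <;> exact ⟨hμ, by linarith⟩
  have hmem := fun μ => (Set.ext_iff.1 hground μ).2
  refine ⟨fun k => ?_, fun μ hμ => ?_, hground, ?_⟩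
  · exact ⟨(hmem _ ⟨k, .inl rfl⟩).1, (hmem _ ⟨k, .inr rfl⟩).1,
      (hmem _ ⟨k, .inl rfl⟩).2, (hmem _ ⟨k, .inr rfl⟩).2⟩
  · have := hε.one_le_inner_of_mem_oddCoset (hC ▸ hμ)
    rw [hh]
    push_cast
    linarith
  · rw [hground, hε.ncard_setOf_add_or_sub, Fintype.card_fin]

/-- For `B_n`, `p = 2`: the groundstates of the Steinberg module, the coset
`[Q + α_n/√2]` of `Λ^⊕ = √2 Λ_R^∨(B_n)`, have conformal dimension `−n/8 + 1/2` and there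
are exactly `2n` of them, given by `Q ± α_{k…n}^⊖` for `k = 1,…,n`, where
`α_{k…n}^⊖ = (Σ_{i=k}^n α_i)/√2` and `h(μ) = (1/2)‖μ−Q‖² − (1/2)‖Q‖²`. -/
theorem stmt_10 {V : Type*} [NormedAddCommGroup V] [InnerProductSpace ℝ V]
    (n : ℕ) (hn : 0 < n) (α : Fin n → V)
    (hdiag : ∀ i : Fin n, ⟪α i, α i⟫ = if i.val = n - 1 then 2 else 4)
    (hadj : ∀ i j : Fin n, j.val = i.val + 1 → ⟪α i, α j⟫ = -2)
    (hfar : ∀ i j : Fin n, i.val + 1 < j.val → ⟪α i, α j⟫ = 0)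
    (hlin : LinearIndependent ℝ α) :
    let Q : V := (1/(2 * Real.sqrt 2)) • ∑ j : Fin n, ((j.val : ℝ) + 1) • α j
    let e : Fin n → V := fun k =>
      (Real.sqrt 2)⁻¹ • ∑ i ∈ Finset.univ.filter (fun i : Fin n => k ≤ i), α i
    let L : Submodule ℤ V := Submodule.span ℤ
      (Set.range fun i => Real.sqrt 2 • ((2 / ⟪α i, α i⟫) • α i))
    let h : V → ℝ := fun μ => 1/2 * ⟪μ - Q, μ - Q⟫ - 1/2 * ⟪Q, Q⟫
    let C : Set V := {μ | μ - (Q + (Real.sqrt 2)⁻¹ • α ⟨n - 1, Nat.sub_lt hn Nat.one_pos⟩) ∈ L}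
    (∀ k, (Q + e k ∈ C) ∧ (Q - e k ∈ C)
        ∧ h (Q + e k) = -((n : ℝ)/8) + 1/2 ∧ h (Q - e k) = -((n : ℝ)/8) + 1/2)
    ∧ (∀ μ ∈ C, -((n : ℝ)/8) + 1/2 ≤ h μ)
    ∧ {μ ∈ C | h μ = -((n : ℝ)/8) + 1/2} = {μ | ∃ k, μ = Q + e k ∨ μ = Q - e k}
    ∧ Set.ncard {μ ∈ C | h μ = -((n : ℝ)/8) + 1/2} = 2 * n :=
  stmt_10_general n hn α hdiag hadj hfar
end

section
/- Jacobi triple product specialization: the theta function of the shifted lattice satisfies t^{2/24} · (Σ_{r∈ℤ} t^{2r² − r}) / ∏_{m≥1}(1−t^m) = (t^{1/24} ∏_{m≥1}(1+t^m))², as an identity of formal power series in t (with fractional prefactors tracked formally). -/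
/-!
The finite Jacobi triple product, a consequence of the `q`-binomial theorem, writes
`∏_{j<N} (1 + t^(4j+1)) (1 + t^(4j+3))` as `∑_{|r| ≤ N} [2N, N+r]_{t⁴} t^(2r² - r)`. The Gaussian
binomials are bounded by `1 / (t⁴; t⁴)_∞` and tend to it as `N → ∞`, so dominated convergence gives
`∑_r t^(2r² - r) = (t⁴; t⁴)_∞ ∏_j (1 + t^(4j+1)) (1 + t^(4j+3))`. Splitting `∏ (1 + t^m)` into odd
and even factors and using `(1 - t^m)(1 + t^m) = 1 - t^(2m)` twice turns the right-hand side into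
`∏ (1 - t^m) · (∏ (1 + t^m))²`; the fractional powers of `t` then combine.
-/

open Finset Filter Topology

section QPochhammer

variable {R : Type*} [CommRing R]

def qPochhammer (a q : R) (n : ℕ) : R :=
  ∏ j ∈ range n, (1 - a * q ^ j)

theorem qPochhammer_succ (a q : R) (n : ℕ) :
    qPochhammer a q (n + 1) = qPochhammer a q n * (1 - a * q ^ n) :=
  prod_range_succ _ _

theorem qPochhammer_succ' (a q : R) (n : ℕ) :
    qPochhammer a q (n + 1) = (1 - a) * qPochhammer (a * q) q n := by
  simp only [qPochhammer, prod_range_succ', pow_zero, mul_one, pow_succ', mul_assoc, mul_comm]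

end QPochhammer

section GaussBinom

variable {K : Type*} [Field K]

/-- For `k > n` the truncated exponent `n + 1 - k` is `0`, so the numerator contains the factor
`1 - 1` and the coefficient vanishes. -/
def gaussBinom (q : K) (n k : ℕ) : K :=
  qPochhammer (q ^ (n + 1 - k)) q k / qPochhammer q q k

variable {q : K}

theorem qPochhammer_self_ne_zero (hq : ∀ j, q ^ (j + 1) ≠ 1) (n : ℕ) : qPochhammer q q n ≠ 0 :=
  prod_ne_zero_iff.mpr fun j _ => by rw [← pow_succ']; exact sub_ne_zero.mpr (hq j).symm

@[simp]
theorem gaussBinom_zero_right (q : K) (n : ℕ) : gaussBinom q n 0 = 1 := by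
  simp [gaussBinom, qPochhammer]

theorem gaussBinom_succ_self (q : K) (n : ℕ) : gaussBinom q n (n + 1) = 0 := by
  rw [gaussBinom, Nat.sub_self, pow_zero, qPochhammer_succ', sub_self, zero_mul, zero_div]

theorem gaussBinom_succ_succ (hq : ∀ j, q ^ (j + 1) ≠ 1) {n k : ℕ} (hk : k ≤ n) :
    gaussBinom q (n + 1) (k + 1) = gaussBinom q n k + q ^ (k + 1) * gaussBinom q n (k + 1) := by
  obtain ⟨m, rfl⟩ := Nat.exists_eq_add_of_le hk
  have h₁ : k + m + 1 + 1 - (k + 1) = m + 1 := by omega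
  have h₂ : k + m + 1 - k = m + 1 := by omega
  have h₃ : k + m + 1 - (k + 1) = m := by omega
  have hden := qPochhammer_self_ne_zero hq k
  have hfac : 1 - q ^ (k + 1) ≠ 0 := sub_ne_zero.mpr (hq k).symm
  rw [gaussBinom, gaussBinom, gaussBinom, h₁, h₂, h₃, qPochhammer_succ' (q ^ m), ← pow_succ,
    qPochhammer_succ _ _ k, qPochhammer_succ q q k, ← pow_succ']
  field_simp
  ring

theorem prod_one_add_mul_pow_eq_sum_gaussBinom (hq : ∀ j, q ^ (j + 1) ≠ 1) (n : ℕ) (u : K) :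
    ∏ j ∈ range n, (1 + u * q ^ j) =
      ∑ k ∈ range (n + 1), q ^ k.choose 2 * gaussBinom q n k * u ^ k := by
  induction n generalizing u with
  | zero => simp
  | succ n ih =>
    have hshift : ∏ j ∈ range (n + 1), (1 + u * q ^ j) =
        (1 + u) * ∑ k ∈ range (n + 1), q ^ (k.choose 2 + k) * gaussBinom q n k * u ^ k := by
      rw [prod_range_succ', pow_zero, mul_one, mul_comm]
      simp only [pow_succ', ← mul_assoc, ih (u * q)]
      congr 1
      exact sum_congr rfl fun k _ => by ring
    set T : ℕ → K := fun k => q ^ (k.choose 2 + k) * gaussBinom q n k * u ^ k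
    have hT : ∑ k ∈ range (n + 1), T (k + 1) + 1 = ∑ k ∈ range (n + 1), T k := by
      have hlast : T (n + 1) = 0 := by simp [T, gaussBinom_succ_self]
      have hfirst : T 0 = 1 := by simp [T]
      rw [← hfirst, ← sum_range_succ', sum_range_succ, hlast, add_zero]
    have hterm : ∀ k ∈ range (n + 1), q ^ (k + 1).choose 2 * gaussBinom q (n + 1) (k + 1) *
        u ^ (k + 1) = u * T k + T (k + 1) := fun k hk => by
      simp only [gaussBinom_succ_succ hq (Nat.lt_succ_iff.mp (mem_range.mp hk)), T,
        Nat.choose_succ_succ', Nat.choose_one_right]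
      ring
    rw [hshift, sum_range_succ' _ (n + 1), sum_congr rfl hterm, sum_add_distrib, ← mul_sum]
    simp only [Nat.choose_zero_succ, pow_zero, gaussBinom_zero_right, mul_one]
    rw [add_assoc, hT]
    ring

theorem two_mul_natCast_choose_two (k : ℕ) : (2 * k.choose 2 : ℤ) = k * (k - 1) := by
  induction k with
  | zero => simp
  | succ k ih => rw [Nat.choose_succ_succ', Nat.choose_one_right]; push_cast; linarith

theorem sum_range_two_mul_add_one (N : ℕ) : ∑ j ∈ range N, (2 * j + 1) = N ^ 2 := by
  induction N with
  | zero => simp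
  | succ N ih => rw [sum_range_succ, ih]; ring

theorem jacobiTripleProduct_finite {x z : K} (hx : x ≠ 0) (hz : z ≠ 0)
    (hq : ∀ j, (x ^ 2) ^ (j + 1) ≠ 1) (N : ℕ) :
    ∏ j ∈ range N, ((1 + z * x ^ (2 * j + 1)) * (1 + z⁻¹ * x ^ (2 * j + 1))) =
      ∑ k ∈ range (2 * N + 1),
        gaussBinom (x ^ 2) (2 * N) k * x ^ (((k : ℤ) - N) ^ 2) * z ^ ((k : ℤ) - N) := by
  -- The `q`-binomial theorem at `q = x²`, `u = z x^(1-2N)`, `n = 2N`, times `z^(-N) x^(N²)`.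
  set u := z * x ^ (1 - 2 * (N : ℤ))
  -- Read backwards, the first `N` factors are `1 + z x^(-(2j+1))`; the last `N`, `1 + z x^(2j+1)`.
  have hsplit : ∏ j ∈ range (2 * N), (1 + u * (x ^ 2) ^ j) =
      (∏ j ∈ range N, (1 + z * (x ^ (2 * j + 1))⁻¹)) *
        ∏ j ∈ range N, (1 + z * x ^ (2 * j + 1)) := by
    rw [two_mul, prod_range_add, ← prod_range_reflect _ N]
    congr 1 <;> refine prod_congr rfl fun j hj => ?_ <;> rw [mul_assoc] <;> congr 2 <;>
      rw [← pow_mul, ← zpow_natCast, ← zpow_natCast x (2 * j + 1), ← zpow_add₀ hx]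
    · rw [← zpow_neg]
      have : ((N - 1 - j : ℕ) : ℤ) = N - 1 - j := by have := mem_range.mp hj; omega
      push_cast [this]; ring_nf
    · push_cast; ring_nf
  have hinvert : z⁻¹ ^ N * x ^ (N ^ 2) * ∏ j ∈ range N, (1 + z * (x ^ (2 * j + 1))⁻¹) =
      ∏ j ∈ range N, (1 + z⁻¹ * x ^ (2 * j + 1)) := by
    rw [← sum_range_two_mul_add_one, ← prod_pow_eq_pow_sum, ← card_range N, ← prod_const,
      card_range, ← prod_mul_distrib, ← prod_mul_distrib]
    refine prod_congr rfl fun j _ => ?_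
    field_simp
    ring
  have hterm : ∀ k, z⁻¹ ^ N * x ^ (N ^ 2) *
      ((x ^ 2) ^ k.choose 2 * gaussBinom (x ^ 2) (2 * N) k * u ^ k) =
      gaussBinom (x ^ 2) (2 * N) k * x ^ (((k : ℤ) - N) ^ 2) * z ^ ((k : ℤ) - N) := fun k => by
    have hxe : x ^ (((k : ℤ) - N) ^ 2) =
        x ^ (N ^ 2) * (x ^ 2) ^ k.choose 2 * (x ^ (1 - 2 * (N : ℤ))) ^ k := by
      rw [← pow_mul, ← zpow_natCast x, ← zpow_natCast x, ← zpow_natCast (x ^ _), ← zpow_mul,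
        ← zpow_add₀ hx, ← zpow_add₀ hx]
      push_cast
      rw [two_mul_natCast_choose_two]; ring_nf
    rw [hxe, zpow_sub₀ hz, zpow_natCast, zpow_natCast, mul_pow, inv_pow]
    field_simp
  rw [← sum_congr rfl fun k _ => hterm k, ← mul_sum, ← prod_one_add_mul_pow_eq_sum_gaussBinom hq,
    hsplit, ← mul_assoc, hinvert, ← prod_mul_distrib]
  exact prod_congr rfl fun _ _ => mul_comm _ _

end GaussBinom

section RealProducts

variable {t : ℝ} {e : ℕ → ℕ}

theorem summable_pow_of_le (h0 : 0 ≤ t) (h1 : t < 1) (he : ∀ n, n ≤ e n) :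
    Summable fun n => t ^ e n :=
  (summable_geometric_of_lt_one h0 h1).of_nonneg_of_le (fun n => by positivity)
    fun n => pow_le_pow_of_le_one h0 h1.le (he n)

theorem multipliable_one_add_pow (h0 : 0 ≤ t) (h1 : t < 1) (he : ∀ n, n ≤ e n) :
    Multipliable fun n => 1 + t ^ e n :=
  multipliable_one_add_of_summable <| by
    simpa [abs_of_nonneg h0] using summable_pow_of_le h0 h1 he

theorem multipliable_one_sub_pow (h0 : 0 ≤ t) (h1 : t < 1) (he : ∀ n, n ≤ e n) :
    Multipliable fun n => 1 - t ^ e n := by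
  simpa [sub_eq_add_neg] using multipliable_one_add_of_summable (f := fun n => -t ^ e n)
    (by simpa [abs_of_nonneg h0] using summable_pow_of_le h0 h1 he)

theorem tprod_one_sub_pow_pos (h0 : 0 ≤ t) (h1 : t < 1) (he : ∀ n, n < e n) :
    0 < ∏' n, (1 - t ^ e n) := by
  have hlog := Real.summable_log_one_add_of_summable (f := fun n => -t ^ e n)
    ((summable_pow_of_le h0 h1 fun n => (he n).le).neg)
  simp only [← sub_eq_add_neg] at hlog
  rw [← Real.rexp_tsum_eq_tprod
    (fun n => sub_pos.mpr (pow_lt_one₀ h0 h1 (Nat.ne_zero_of_lt (he n)))) hlog]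
  exact Real.exp_pos _

theorem tprod_one_sub_pow_mul_tprod_one_add_pow (h0 : 0 ≤ t) (h1 : t < 1) (he : ∀ n, n ≤ e n) :
    (∏' n, (1 - t ^ e n)) * ∏' n, (1 + t ^ e n) = ∏' n, (1 - t ^ (2 * e n)) := by
  rw [← (multipliable_one_sub_pow h0 h1 he).tprod_mul (multipliable_one_add_pow h0 h1 he)]
  exact tprod_congr fun n => by ring

end RealProducts

section GaussBinomReal

variable {q : ℝ}

theorem qPochhammer_nonneg {a : ℝ} (ha : a ≤ 1) (h0 : 0 ≤ q) (h1 : q ≤ 1) (n : ℕ) :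
    0 ≤ qPochhammer a q n :=
  prod_nonneg fun j _ => sub_nonneg.mpr (mul_le_one₀ ha (pow_nonneg h0 j) (pow_le_one₀ h0 h1))

theorem qPochhammer_le_one {a : ℝ} (ha₀ : 0 ≤ a) (ha₁ : a ≤ 1) (h0 : 0 ≤ q) (h1 : q ≤ 1) (n : ℕ) :
    qPochhammer a q n ≤ 1 :=
  prod_le_one (fun j _ => sub_nonneg.mpr (mul_le_one₀ ha₁ (pow_nonneg h0 j) (pow_le_one₀ h0 h1)))
    fun j _ => sub_le_self _ (by positivity)

theorem abs_qPochhammer_sub_one_le {a : ℝ} (ha : 0 ≤ a) (h0 : 0 ≤ q) (h1 : q < 1) (n : ℕ) :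
    |qPochhammer a q n - 1| ≤ Real.exp (a / (1 - q)) - 1 := by
  have h := norm_prod_one_add_sub_one_le (range n) fun j => -(a * q ^ j)
  simp only [← sub_eq_add_neg, norm_neg, Real.norm_eq_abs, abs_mul, abs_pow, abs_of_nonneg ha,
    abs_of_nonneg h0, ← mul_sum] at h
  refine h.trans (sub_le_sub_right (Real.exp_le_exp.mpr ?_) 1)
  rw [div_eq_mul_one_div]
  gcongr
  simpa using geom_sum_Ico_le_of_lt_one (m := 0) (n := n) h0 h1

theorem tendsto_qPochhammer_self (h0 : 0 ≤ q) (h1 : q < 1) :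
    Tendsto (qPochhammer q q) atTop (𝓝 (∏' j, (1 - q ^ (j + 1)))) := by
  have h := (multipliable_one_sub_pow h0 h1 (e := (· + 1)) fun n => by omega).tendsto_prod_tprod_nat
  simp only [pow_succ'] at h ⊢
  exact h

theorem tprod_le_qPochhammer_self (h0 : 0 ≤ q) (h1 : q < 1) (n : ℕ) :
    ∏' j, (1 - q ^ (j + 1)) ≤ qPochhammer q q n := by
  refine Antitone.le_of_tendsto (antitone_nat_of_succ_le fun n => ?_)
    (tendsto_qPochhammer_self h0 h1) n
  rw [qPochhammer_succ]
  exact mul_le_of_le_one_right (qPochhammer_nonneg h1.le h0 h1.le n) (sub_le_self _ (by positivity))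

theorem gaussBinom_nonneg (h0 : 0 ≤ q) (h1 : q < 1) (n k : ℕ) : 0 ≤ gaussBinom q n k :=
  div_nonneg (qPochhammer_nonneg (pow_le_one₀ h0 h1.le) h0 h1.le k)
    (qPochhammer_nonneg h1.le h0 h1.le k)

theorem gaussBinom_le_inv_tprod (h0 : 0 ≤ q) (h1 : q < 1) (n k : ℕ) :
    gaussBinom q n k ≤ (∏' j, (1 - q ^ (j + 1)))⁻¹ := by
  rw [← one_div]
  exact div_le_div₀ zero_le_one
    (qPochhammer_le_one (by positivity) (pow_le_one₀ h0 h1.le) h0 h1.le k)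
    (tprod_one_sub_pow_pos h0 h1 fun n => by omega) (tprod_le_qPochhammer_self h0 h1 k)

theorem tendsto_qPochhammer_pow_one (h0 : 0 ≤ q) (h1 : q < 1) :
    Tendsto (fun p : ℕ × ℕ => qPochhammer (q ^ (p.1 + 1)) q p.2) (atTop ×ˢ ⊤) (𝓝 1) := by
  have hε : Tendsto (fun m : ℕ => Real.exp (q ^ (m + 1) / (1 - q)) - 1) atTop (𝓝 0) := by
    have h := (tendsto_pow_atTop_nhds_zero_of_lt_one h0 h1).comp (tendsto_add_atTop_nat 1)
    simpa [Function.comp_def] using ((h.div_const (1 - q)).rexp).sub_const 1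
  rw [tendsto_iff_norm_sub_tendsto_zero]
  exact squeeze_zero (fun _ => norm_nonneg _)
    (fun p => abs_qPochhammer_sub_one_le (by positivity) h0 h1 p.2) (hε.comp tendsto_fst)

theorem tendsto_gaussBinom (h0 : 0 ≤ q) (h1 : q < 1) :
    Tendsto (fun p : ℕ × ℕ => gaussBinom q (p.1 + p.2) p.2) (atTop ×ˢ atTop)
      (𝓝 (∏' j, (1 - q ^ (j + 1)))⁻¹) := by
  have hnum := (tendsto_qPochhammer_pow_one h0 h1).mono_left
    (prod_mono_right atTop (le_top (a := atTop)))
  have hden := (tendsto_qPochhammer_self h0 h1).comp (tendsto_snd (f := (atTop : Filter ℕ)))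
  have h := hnum.div hden (tprod_one_sub_pow_pos h0 h1 fun n => by omega).ne'
  rw [one_div] at h
  refine h.congr fun p => ?_
  rw [Pi.div_apply, Function.comp_apply, gaussBinom, add_right_comm, Nat.add_sub_cancel]

end GaussBinomReal

section JacobiTripleProduct

variable {t : ℝ}

/-- The terms of `jacobiTripleProduct_finite` of order `N` at `x = t²`, `z = t⁻¹`, indexed by
`r = k - N`. -/
noncomputable def thetaTrunc (t : ℝ) (N : ℕ) (r : ℤ) : ℝ :=
  if r ∈ (range (2 * N + 1)).image fun k : ℕ => (k : ℤ) - N then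
    gaussBinom (t ^ 4) (2 * N) (r + N).toNat * t ^ (2 * r ^ 2 - r)
  else 0

theorem tsum_thetaTrunc (h0 : 0 < t) (h1 : t < 1) (N : ℕ) :
    ∑' r, thetaTrunc t N r = ∏ j ∈ range N, ((1 + t ^ (4 * j + 1)) * (1 + t ^ (4 * j + 3))) := by
  have hx : (t ^ 2) ^ 2 = t ^ 4 := by ring
  have hq : ∀ j, ((t ^ 2) ^ 2) ^ (j + 1) ≠ 1 := fun j => by
    rw [hx]
    exact (pow_lt_one₀ (by positivity) (pow_lt_one₀ h0.le h1 four_ne_zero) j.succ_ne_zero).ne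
  have hfin := jacobiTripleProduct_finite (pow_ne_zero 2 h0.ne') (inv_ne_zero h0.ne') hq N
  have hterm : ∀ r : ℤ, (t ^ 2) ^ (r ^ 2) * t⁻¹ ^ r = t ^ (2 * r ^ 2 - r) := fun r => by
    rw [← zpow_natCast, ← zpow_mul, inv_zpow', ← zpow_add₀ h0.ne']
    push_cast; ring_nf
  unfold thetaTrunc
  rw [tsum_eq_sum fun r hr => if_neg hr, sum_congr rfl fun r hr => if_pos hr,
    sum_image fun a _ b _ h => by simpa using h]
  simp only [hx, inv_inv, mul_assoc, hterm] at hfin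
  have hodd : ∀ j : ℕ, t⁻¹ * (t ^ 2) ^ (2 * j + 1) = t ^ (4 * j + 1) ∧
      t * (t ^ 2) ^ (2 * j + 1) = t ^ (4 * j + 3) := fun j => by
    rw [← pow_mul, show 2 * (2 * j + 1) = 4 * j + 1 + 1 by ring, pow_succ]
    exact ⟨by field_simp, by ring⟩
  simp only [hodd, sub_add_cancel, Int.toNat_natCast] at hfin ⊢
  exact hfin.symm

theorem abs_thetaTrunc_le (h0 : 0 < t) (h1 : t < 1) (N : ℕ) (r : ℤ) :
    |thetaTrunc t N r| ≤ (∏' j, (1 - (t ^ 4) ^ (j + 1)))⁻¹ * t ^ (2 * r ^ 2 - r) := by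
  have hq0 : 0 ≤ t ^ 4 := by positivity
  have hq1 : t ^ 4 < 1 := pow_lt_one₀ h0.le h1 four_ne_zero
  unfold thetaTrunc
  split_ifs
  · rw [abs_mul, abs_of_nonneg (gaussBinom_nonneg hq0 hq1 _ _), abs_of_pos (zpow_pos h0 _)]
    gcongr
    exact gaussBinom_le_inv_tprod hq0 hq1 _ _
  · rw [abs_zero]
    exact mul_nonneg (inv_nonneg.mpr (tprod_one_sub_pow_pos hq0 hq1 fun n => by omega).le)
      (zpow_pos h0 _).le

theorem tendsto_thetaTrunc (h0 : 0 < t) (h1 : t < 1) (r : ℤ) :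
    Tendsto (fun N => thetaTrunc t N r) atTop
      (𝓝 ((∏' j, (1 - (t ^ 4) ^ (j + 1)))⁻¹ * t ^ (2 * r ^ 2 - r))) := by
  have hpair : Tendsto (fun N : ℕ => (((N : ℤ) - r).toNat, ((N : ℤ) + r).toNat)) atTop
      (atTop ×ˢ atTop) :=
    (tendsto_atTop_atTop.mpr fun b => ⟨b + r.natAbs, fun N hN => by omega⟩).prodMk
      (tendsto_atTop_atTop.mpr fun b => ⟨b + r.natAbs, fun N hN => by omega⟩)
  refine (((tendsto_gaussBinom (by positivity) (pow_lt_one₀ h0.le h1 four_ne_zero)).comp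
    hpair).mul_const _).congr' ?_
  filter_upwards [eventually_ge_atTop r.natAbs] with N hN
  unfold thetaTrunc
  rw [if_pos (mem_image.mpr ⟨(r + N).toNat, mem_range.mpr (by omega), by omega⟩),
    Function.comp_apply]
  congr 2 <;> omega

theorem summable_zpow_two_mul_sq_sub (h0 : 0 < t) (h1 : t < 1) :
    Summable fun r : ℤ => t ^ (2 * r ^ 2 - r) := by
  refine .of_nat_of_neg ?_ ?_ <;>
    refine (summable_geometric_of_lt_one h0.le h1).of_nonneg_of_le (fun n => by positivity)
      fun n => ?_ <;>
    rw [← zpow_natCast] <;>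
    exact zpow_le_zpow_right_of_le_one₀ h0 h1.le (by nlinarith)

theorem tsum_zpow_two_mul_sq_sub_eq_tprod (h0 : 0 < t) (h1 : t < 1) :
    ∑' r : ℤ, t ^ (2 * r ^ 2 - r) =
      (∏' j, (1 - (t ^ 4) ^ (j + 1))) * ∏' j, ((1 + t ^ (4 * j + 1)) * (1 + t ^ (4 * j + 3))) := by
  set D := ∏' j, (1 - (t ^ 4) ^ (j + 1))
  have hD : 0 < D :=
    tprod_one_sub_pow_pos (by positivity) (pow_lt_one₀ h0.le h1 four_ne_zero) fun n => by omega
  have hprod := ((multipliable_one_add_pow h0.le h1 (e := (4 * · + 1)) fun n => by omega).mul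
    (multipliable_one_add_pow h0.le h1 (e := (4 * · + 3)) fun n => by omega)).tendsto_prod_tprod_nat
  have hdom := tendsto_tsum_of_dominated_convergence
    ((summable_zpow_two_mul_sq_sub h0 h1).mul_left D⁻¹) (tendsto_thetaTrunc h0 h1)
    (Eventually.of_forall (abs_thetaTrunc_le h0 h1))
  simp only [tsum_thetaTrunc h0 h1, tsum_mul_left] at hdom
  rw [tendsto_nhds_unique hprod hdom, mul_inv_cancel_left₀ hD.ne']

theorem tprod_one_sub_mul_sq_tprod_one_add (h0 : 0 ≤ t) (h1 : t < 1) :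
    (∏' m : ℕ, (1 - t ^ (m + 1))) * (∏' m : ℕ, (1 + t ^ (m + 1))) ^ 2 =
      (∏' j, (1 - (t ^ 4) ^ (j + 1))) * ∏' j, ((1 + t ^ (4 * j + 1)) * (1 + t ^ (4 * j + 3))) := by
  have hodd : ∏' j, ((1 + t ^ (4 * j + 1)) * (1 + t ^ (4 * j + 3))) =
      ∏' k, (1 + t ^ (2 * k + 1)) := by
    rw [(multipliable_one_add_pow h0 h1 (e := (4 * · + 1)) fun n => by omega).tprod_mul
      (multipliable_one_add_pow h0 h1 (e := (4 * · + 3)) fun n => by omega),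
      ← tprod_even_mul_odd (f := fun k => 1 + t ^ (2 * k + 1))
        (multipliable_one_add_pow h0 h1 (e := fun k => 2 * (2 * k) + 1) fun n => by omega)
        (multipliable_one_add_pow h0 h1 (e := fun k => 2 * (2 * k + 1) + 1) fun n => by omega)]
    congr 1 <;> exact tprod_congr fun j => by ring_nf
  have hsplit : ∏' m : ℕ, (1 + t ^ (m + 1)) =
      (∏' k, (1 + t ^ (2 * (k + 1)))) * ∏' k, (1 + t ^ (2 * k + 1)) := by
    rw [← tprod_even_mul_odd (f := fun m => 1 + t ^ (m + 1))
      (multipliable_one_add_pow h0 h1 (e := fun k => 2 * k + 1) fun n => by omega)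
      (multipliable_one_add_pow h0 h1 (e := fun k => 2 * k + 1 + 1) fun n => by omega), mul_comm]
    congr 1
  have hquad : ∏' j, (1 - (t ^ 4) ^ (j + 1)) = ∏' n, (1 - t ^ (2 * (2 * (n + 1)))) :=
    tprod_congr fun j => by ring_nf
  have hpair₁ := tprod_one_sub_pow_mul_tprod_one_add_pow h0 h1 (e := (· + 1)) fun n => by omega
  have hpair₂ := tprod_one_sub_pow_mul_tprod_one_add_pow h0 h1 (e := fun n => 2 * (n + 1))
    fun n => by omega
  rw [sq, ← mul_assoc, hpair₁, hsplit, ← mul_assoc, hpair₂, hquad, hodd]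

end JacobiTripleProduct

/-- Jacobi triple product specialization: the theta function of the shifted lattice
satisfies `t^{2/24} · (Σ_{r∈ℤ} t^{2r² − r}) / ∏_{m≥1}(1−t^m) = (t^{1/24} ∏_{m≥1}(1+t^m))²`,
here stated for real `0 < t < 1` (tracking the fractional powers via `rpow`). -/
theorem stmt_13 (t : ℝ) (h0 : 0 < t) (h1 : t < 1) :
    t ^ ((2 : ℝ)/24) * (∑' r : ℤ, t ^ (2 * r ^ 2 - r)) / ∏' m : ℕ, (1 - t ^ (m + 1))
      = (t ^ ((1 : ℝ)/24) * ∏' m : ℕ, (1 + t ^ (m + 1))) ^ 2 := by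
  have hA : 0 < ∏' m : ℕ, (1 - t ^ (m + 1)) := tprod_one_sub_pow_pos h0.le h1 fun n => by omega
  have hroot : (t ^ ((1 : ℝ) / 24)) ^ 2 = t ^ ((2 : ℝ) / 24) := by
    rw [← Real.rpow_natCast, ← Real.rpow_mul h0.le]
    norm_num
  rw [tsum_zpow_two_mul_sq_sub_eq_tprod h0 h1, ← tprod_one_sub_mul_sq_tprod_one_add h0.le h1,
    mul_pow, hroot]
  field_simp
end

section
/- For B2 at p=2, the four cosets of Λ^⊕ = √2Λ_R^∨(B2) in its dual (1/√2)Λ_W have groundstate conformal dimensions 0, −1/4, 0, 1/4 (for the cosets [0], [λ2/√2], [λ1/√2], [(λ1+λ2)/√2] respectively), with respective numbers of groundstates 2, 1, 2, 4. -/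
/-!
With `f₁ = α1/√2` and `f₂ = 2Q = α1/√2 + √2α2` the Gram matrix becomes `2·I`: `Λ^⊕ = ℤf₁ ⊕ ℤf₂` is a
square lattice and its dual `½Λ^⊕` contains `Q`. Writing a dual vector as `μ = Q + (P f₁ + R f₂)/2`
with `P, R ∈ ℤ` gives `h μ = (P² + R²)/4 - 1/4`, and the coset of `μ` is the parity class of
`(P, R)`: `(even, odd), (even, even), (odd, even), (odd, odd)` for `0, Q, λ1/√2, (λ1+λ2)/√2`.
The minimisation separates in `P` and `R`, and the minimum of `P²` on a parity class is `0`,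
attained once, or `1`, attained twice (`P = ±1`).
-/

open scoped RealInnerProductSpace
open Set

/-- `ncard` is `0` on infinite sets, so `k = 0` does not mean that the minimum is unattained. -/
def IsMinWithCount {α R : Type*} [Preorder R] (f : α → R) (S : Set α) (a : R) (k : ℕ) : Prop :=
  (∀ x ∈ S, a ≤ f x) ∧ {x ∈ S | f x = a}.ncard = k

namespace IsMinWithCount

variable {α β R R' : Type*} {S : Set α} {k : ℕ}

theorem prod [AddCommMonoid R] [PartialOrder R] [IsOrderedCancelAddMonoid R] {f : α → R}
    {g : β → R} {T : Set β} {a b : R} {l : ℕ} (hf : IsMinWithCount f S a k)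
    (hg : IsMinWithCount g T b l) :
    IsMinWithCount (fun x : α × β => f x.1 + g x.2) (S ×ˢ T) (a + b) (k * l) := by
  refine ⟨fun x hx => add_le_add (hf.1 _ hx.1) (hg.1 _ hx.2), ?_⟩
  have hsep : {x ∈ S ×ˢ T | f x.1 + g x.2 = a + b} = {x ∈ S | f x = a} ×ˢ {y ∈ T | g y = b} := by
    ext ⟨x, y⟩
    simp only [mem_sep_iff, mem_prod]
    constructor
    · rintro ⟨⟨hx, hy⟩, hxy⟩
      obtain ⟨rfl, rfl⟩ := (add_eq_add_iff_eq_and_eq (hf.1 x hx) (hg.1 y hy)).mp hxy.symm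
      exact ⟨⟨hx, rfl⟩, hy, rfl⟩
    · rintro ⟨⟨hx, rfl⟩, hy, rfl⟩
      exact ⟨⟨hx, hy⟩, rfl⟩
  rw [hsep, ncard_prod, hf.2, hg.2]

theorem comp_strictMono [LinearOrder R] [Preorder R'] {f : α → R} {a : R} {φ : R → R'}
    (hφ : StrictMono φ) (h : IsMinWithCount f S a k) : IsMinWithCount (φ ∘ f) S (φ a) k := by
  refine ⟨fun x hx => hφ.monotone (h.1 x hx), ?_⟩
  simpa only [Function.comp_apply, hφ.injective.eq_iff] using h.2

theorem image [Preorder R] {e : α → β} (he : Function.Injective e) {F : β → R} {a : R}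
    (h : IsMinWithCount (F ∘ e) S a k) : IsMinWithCount F (e '' S) a k := by
  refine ⟨by rintro _ ⟨x, hx, rfl⟩; exact h.1 x hx, ?_⟩
  have hsep : {y ∈ e '' S | F y = a} = e '' {x ∈ S | F (e x) = a} := by
    ext y
    constructor
    · rintro ⟨⟨x, hx, rfl⟩, hy⟩
      exact ⟨x, ⟨hx, hy⟩, rfl⟩
    · rintro ⟨x, ⟨hx, hy⟩, rfl⟩
      exact ⟨⟨x, hx, rfl⟩, hy⟩
  rw [hsep, ncard_image_of_injective _ he]
  exact h.2

end IsMinWithCount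

theorem isMinWithCount_sq_of_even {q : ℤ} (hq : Even q) :
    IsMinWithCount (fun p : ℤ => p ^ 2) {p | p ≡ q [ZMOD 2]} 0 1 := by
  refine ⟨fun p _ => sq_nonneg p, ?_⟩
  have hq' := Int.even_iff.mp hq
  have hsep : {p ∈ {p : ℤ | p ≡ q [ZMOD 2]} | p ^ 2 = 0} = {0} := by
    ext p
    simp only [mem_ofPred_eq, mem_singleton_iff, Int.ModEq, pow_eq_zero_iff two_ne_zero]
    omega
  rw [hsep, ncard_singleton]

theorem isMinWithCount_sq_of_odd {q : ℤ} (hq : Odd q) :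
    IsMinWithCount (fun p : ℤ => p ^ 2) {p | p ≡ q [ZMOD 2]} 1 2 := by
  have hq' := Int.odd_iff.mp hq
  refine ⟨fun p (hp : p % 2 = q % 2) => ?_, ?_⟩
  · exact (one_le_sq_iff_one_le_abs p).mpr (Int.one_le_abs (by omega))
  have hsep : {p ∈ {p : ℤ | p ≡ q [ZMOD 2]} | p ^ 2 = 1} = {1, -1} := by
    ext p
    simp only [mem_ofPred_eq, mem_insert_iff, mem_singleton_iff, Int.ModEq,
      sq_eq_one_iff]
    omega
  rw [hsep, ncard_pair (by decide)]

theorem Submodule.span_pair_self_add {R M : Type*} [Ring R] [AddCommGroup M] [Module R M]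
    (x y : M) : span R {x, x + y} = span R {x, y} := by
  apply le_antisymm <;> rw [span_le, insert_subset_iff, singleton_subset_iff] <;>
    refine ⟨subset_span (mem_insert x _), ?_⟩
  · exact add_mem (subset_span (mem_insert x _)) (subset_span (mem_insert_of_mem x rfl))
  · simpa using sub_mem (subset_span (mem_insert_of_mem x rfl) : x + y ∈ span R {x, x + y})
      (subset_span (mem_insert x _))

section HalfLattice

variable {V : Type*} [NormedAddCommGroup V] [InnerProductSpace ℝ V]

noncomputable def halfLatticePoint (Q f₁ f₂ : V) (p : ℤ × ℤ) : V :=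
  Q + (1 / 2 : ℝ) • ((p.1 : ℝ) • f₁ + (p.2 : ℝ) • f₂)

theorem setOf_sub_halfLatticePoint_mem_span (Q f₁ f₂ : V) (q : ℤ × ℤ) :
    {μ | μ - halfLatticePoint Q f₁ f₂ q ∈ Submodule.span ℤ {f₁, f₂}} =
      halfLatticePoint Q f₁ f₂ '' ({p | p ≡ q.1 [ZMOD 2]} ×ˢ {p | p ≡ q.2 [ZMOD 2]}) := by
  ext μ
  simp only [mem_ofPred_eq, Submodule.mem_span_pair, mem_image, mem_prod]
  constructor
  · rintro ⟨m, n, hmn⟩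
    refine ⟨(q.1 + 2 * m, q.2 + 2 * n), ⟨?_, ?_⟩, ?_⟩
    · simp [Int.ModEq]
    · simp [Int.ModEq]
    · rw [← sub_add_cancel μ (halfLatticePoint Q f₁ f₂ q), ← hmn]
      simp only [halfLatticePoint, ← Int.cast_smul_eq_zsmul ℝ]
      push_cast
      module
  · rintro ⟨p, ⟨h₁, h₂⟩, rfl⟩
    obtain ⟨m, hm⟩ := h₁.symm.dvd
    obtain ⟨n, hn⟩ := h₂.symm.dvd
    refine ⟨m, n, ?_⟩
    simp only [halfLatticePoint, ← Int.cast_smul_eq_zsmul ℝ]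
    rw [show (p.1 : ℝ) = q.1 + 2 * m by exact_mod_cast (by omega),
      show (p.2 : ℝ) = q.2 + 2 * n by exact_mod_cast (by omega)]
    module

theorem halfLatticePoint_injective {Q f₁ f₂ : V} (h₁ : f₁ ≠ 0) (h₂ : f₂ ≠ 0)
    (h₁₂ : ⟪f₁, f₂⟫ = 0) : Function.Injective (halfLatticePoint Q f₁ f₂) := by
  have hli : LinearIndependent ℝ ![f₁, f₂] := by
    refine linearIndependent_of_ne_zero_of_inner_eq_zero (fun i => ?_) fun i j hij => ?_
    · fin_cases i <;> assumption
    · fin_cases i <;> fin_cases j <;> simp_all [real_inner_comm]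
  intro p p' h
  have := hli.eq_of_pair (smul_right_injective V (by norm_num : (1 / 2 : ℝ) ≠ 0)
    (add_left_cancel h))
  exact Prod.ext (by exact_mod_cast this.1) (by exact_mod_cast this.2)

theorem inner_halfLatticePoint_sub_self {Q f₁ f₂ : V} (h₁ : ⟪f₁, f₁⟫ = 2) (h₂ : ⟪f₂, f₂⟫ = 2)
    (h₁₂ : ⟪f₁, f₂⟫ = 0) (p : ℤ × ℤ) :
    ⟪halfLatticePoint Q f₁ f₂ p - Q, halfLatticePoint Q f₁ f₂ p - Q⟫ =
      ((p.1 ^ 2 + p.2 ^ 2 : ℤ) : ℝ) / 2 := by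
  rw [halfLatticePoint, add_sub_cancel_left]
  simp only [real_inner_smul_left, real_inner_smul_right, inner_add_left, inner_add_right,
    h₁, h₂, h₁₂, real_inner_comm f₁ f₂]
  push_cast
  ring

theorem isMinWithCount_sub_halfLatticePoint {Q f₁ f₂ c : V} {q : ℤ × ℤ} {a b : ℤ} {k l : ℕ} {v : ℝ}
    (h₁ : ⟪f₁, f₁⟫ = 2) (h₂ : ⟪f₂, f₂⟫ = 2) (h₁₂ : ⟪f₁, f₂⟫ = 0)
    (hc : c = halfLatticePoint Q f₁ f₂ q) (hv : v = ((a + b : ℤ) : ℝ) / 4 - 1 / 2 * ⟪Q, Q⟫)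
    (ha : IsMinWithCount (fun p : ℤ => p ^ 2) {p | p ≡ q.1 [ZMOD 2]} a k)
    (hb : IsMinWithCount (fun p : ℤ => p ^ 2) {p | p ≡ q.2 [ZMOD 2]} b l) :
    IsMinWithCount (fun μ => 1 / 2 * ⟪μ - Q, μ - Q⟫ - 1 / 2 * ⟪Q, Q⟫)
      {μ | μ - c ∈ Submodule.span ℤ {f₁, f₂}} v (k * l) := by
  have hne (f : V) (hf : ⟪f, f⟫ = 2) : f ≠ 0 := by rintro rfl; simp at hf
  have hφ : StrictMono fun n : ℤ => (n : ℝ) / 4 - 1 / 2 * ⟪Q, Q⟫ := fun m n hmn => by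
    dsimp only
    gcongr
  rw [hc, setOf_sub_halfLatticePoint_mem_span, hv]
  refine IsMinWithCount.image (halfLatticePoint_injective (hne f₁ h₁) (hne f₂ h₂) h₁₂) ?_
  convert (ha.prod hb).comp_strictMono hφ using 1
  funext p
  simp only [Function.comp_apply, inner_halfLatticePoint_sub_self h₁ h₂ h₁₂]
  push_cast
  ring

end HalfLattice

namespace B2

variable {V : Type*} [NormedAddCommGroup V] [InnerProductSpace ℝ V] {α1 α2 Q : V}

theorem span_eq_span_orthogonal (hQ : Q = (1 / (2 * √2)) • α1 + (√2)⁻¹ • α2) :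
    Submodule.span ℤ {(√2)⁻¹ • α1, √2 • α2} =
      Submodule.span ℤ {(√2)⁻¹ • α1, (2 : ℝ) • Q} := by
  have hs : √2 ^ 2 = 2 := Real.sq_sqrt zero_le_two
  have hf₂ : (2 : ℝ) • Q = (√2)⁻¹ • α1 + √2 • α2 := by
    rw [hQ]
    match_scalars <;> field_simp
    exact hs.symm
  rw [hf₂, Submodule.span_pair_self_add]

theorem inner_orthogonal (h11 : ⟪α1, α1⟫ = 4) (h12 : ⟪α1, α2⟫ = -2) (h22 : ⟪α2, α2⟫ = 2)
    (hQ : Q = (1 / (2 * √2)) • α1 + (√2)⁻¹ • α2) :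
    ⟪(√2)⁻¹ • α1, (√2)⁻¹ • α1⟫ = 2 ∧ ⟪(2 : ℝ) • Q, (2 : ℝ) • Q⟫ = 2 ∧
      ⟪(√2)⁻¹ • α1, (2 : ℝ) • Q⟫ = 0 ∧ ⟪Q, Q⟫ = 1 / 2 := by
  have hs : √2 ^ 2 = 2 := Real.sq_sqrt zero_le_two
  have hQQ : ⟪Q, Q⟫ = 1 / 2 := by
    simp only [hQ, real_inner_smul_left, real_inner_smul_right, inner_add_left, inner_add_right,
      h11, h12, h22, real_inner_comm α1 α2]
    field_simp
    linear_combination -2 * hs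
  refine ⟨?_, ?_, ?_, hQQ⟩
  · simp only [real_inner_smul_left, real_inner_smul_right, h11]
    field_simp
    linear_combination -2 * hs
  · simp only [real_inner_smul_left, real_inner_smul_right, hQQ]
    norm_num
  · simp only [hQ, real_inner_smul_left, real_inner_smul_right, inner_add_right, h11, h12]
    field_simp
    ring

theorem halfLatticePoint_eq (hQ : Q = (1 / (2 * √2)) • α1 + (√2)⁻¹ • α2) :
    let hp := halfLatticePoint Q ((√2)⁻¹ • α1) ((2 : ℝ) • Q)
    0 = hp (0, -1) ∧ Q = hp (0, 0) ∧ (√2)⁻¹ • (α1 + α2) = hp (1, 0) ∧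
      (√2)⁻¹ • (α1 + α2) + Q = hp (1, 1) := by
  intro hp
  refine ⟨?_, ?_, ?_, ?_⟩ <;> simp only [hp, halfLatticePoint] <;> push_cast
  · module
  · module
  · rw [hQ]; module
  · rw [hQ]; module

end B2

theorem stmt_18_general {V : Type*} [NormedAddCommGroup V] [InnerProductSpace ℝ V]
    (α1 α2 : V) (h11 : ⟪α1, α1⟫ = 4) (h12 : ⟪α1, α2⟫ = -2) (h22 : ⟪α2, α2⟫ = 2) :
    let Q : V := (1/(2 * Real.sqrt 2)) • α1 + (Real.sqrt 2)⁻¹ • α2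
    let lam1 : V := (Real.sqrt 2)⁻¹ • (α1 + α2)
    let L : Submodule ℤ V := Submodule.span ℤ {(Real.sqrt 2)⁻¹ • α1, Real.sqrt 2 • α2}
    let h : V → ℝ := fun μ => 1/2 * ⟪μ - Q, μ - Q⟫ - 1/2 * ⟪Q, Q⟫
    ((∀ μ : V, μ - 0 ∈ L → 0 ≤ h μ) ∧ Set.ncard {μ : V | μ - 0 ∈ L ∧ h μ = 0} = 2)
    ∧ ((∀ μ : V, μ - Q ∈ L → -(1/4) ≤ h μ)
        ∧ Set.ncard {μ : V | μ - Q ∈ L ∧ h μ = -(1/4)} = 1)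
    ∧ ((∀ μ : V, μ - lam1 ∈ L → 0 ≤ h μ)
        ∧ Set.ncard {μ : V | μ - lam1 ∈ L ∧ h μ = 0} = 2)
    ∧ ((∀ μ : V, μ - (lam1 + Q) ∈ L → 1/4 ≤ h μ)
        ∧ Set.ncard {μ : V | μ - (lam1 + Q) ∈ L ∧ h μ = 1/4} = 4) := by
  intro Q lam1 L h
  obtain ⟨h₁, h₂, h₁₂, hQQ⟩ := B2.inner_orthogonal h11 h12 h22 (Q := Q) rfl
  obtain ⟨hc₀, hc_Q, hc_lam1, hc_lam1Q⟩ := B2.halfLatticePoint_eq (α2 := α2) (Q := Q) rfl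
  have key {c : V} {q : ℤ × ℤ} {a b : ℤ} {k l : ℕ} {v : ℝ}
      (hc : c = halfLatticePoint Q ((√2)⁻¹ • α1) ((2 : ℝ) • Q) q)
      (hv : v = ((a + b : ℤ) : ℝ) / 4 - 1 / 4)
      (ha : IsMinWithCount (fun p : ℤ => p ^ 2) {p | p ≡ q.1 [ZMOD 2]} a k)
      (hb : IsMinWithCount (fun p : ℤ => p ^ 2) {p | p ≡ q.2 [ZMOD 2]} b l) :
      IsMinWithCount h {μ | μ - c ∈ L} v (k * l) := by
    rw [show L = _ from B2.span_eq_span_orthogonal rfl]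
    exact isMinWithCount_sub_halfLatticePoint h₁ h₂ h₁₂ hc (by rw [hv, hQQ]; ring) ha hb
  exact ⟨key hc₀ (by norm_num) (isMinWithCount_sq_of_even Even.zero)
      (isMinWithCount_sq_of_odd odd_neg_one),
    key hc_Q (by norm_num) (isMinWithCount_sq_of_even Even.zero)
      (isMinWithCount_sq_of_even Even.zero),
    key hc_lam1 (by norm_num) (isMinWithCount_sq_of_odd odd_one)
      (isMinWithCount_sq_of_even Even.zero),
    key hc_lam1Q (by norm_num) (isMinWithCount_sq_of_odd odd_one)
      (isMinWithCount_sq_of_odd odd_one)⟩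

/-- For `B2` at `p = 2`, the four cosets of `Λ^⊕ = √2Λ_R^∨(B2)` (generated by `α1/√2` and
`√2α2`) in its dual `(1/√2)Λ_W` have groundstate conformal dimensions `0, −1/4, 0, 1/4`
(for the cosets `[0]`, `[λ2/√2] = [Q]`, `[λ1/√2]`, `[(λ1+λ2)/√2]` respectively), with
respective numbers of groundstates `2, 1, 2, 4`. Here `h(μ) = (1/2)‖μ−Q‖² − (1/2)‖Q‖²`,
`Q = α1/(2√2) + α2/√2`, `λ1/√2 = (α1+α2)/√2`. -/
theorem stmt_18 {V : Type*} [NormedAddCommGroup V] [InnerProductSpace ℝ V]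
    (α1 α2 : V) (h11 : ⟪α1, α1⟫ = 4) (h12 : ⟪α1, α2⟫ = -2) (h22 : ⟪α2, α2⟫ = 2)
    (hlin : LinearIndependent ℝ ![α1, α2]) :
    let Q : V := (1/(2 * Real.sqrt 2)) • α1 + (Real.sqrt 2)⁻¹ • α2
    let lam1 : V := (Real.sqrt 2)⁻¹ • (α1 + α2)
    let L : Submodule ℤ V := Submodule.span ℤ {(Real.sqrt 2)⁻¹ • α1, Real.sqrt 2 • α2}
    let h : V → ℝ := fun μ => 1/2 * ⟪μ - Q, μ - Q⟫ - 1/2 * ⟪Q, Q⟫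
    ((∀ μ : V, μ - 0 ∈ L → 0 ≤ h μ) ∧ Set.ncard {μ : V | μ - 0 ∈ L ∧ h μ = 0} = 2)
    ∧ ((∀ μ : V, μ - Q ∈ L → -(1/4) ≤ h μ)
        ∧ Set.ncard {μ : V | μ - Q ∈ L ∧ h μ = -(1/4)} = 1)
    ∧ ((∀ μ : V, μ - lam1 ∈ L → 0 ≤ h μ)
        ∧ Set.ncard {μ : V | μ - lam1 ∈ L ∧ h μ = 0} = 2)
    ∧ ((∀ μ : V, μ - (lam1 + Q) ∈ L → 1/4 ≤ h μ)
        ∧ Set.ncard {μ : V | μ - (lam1 + Q) ∈ L ∧ h μ = 1/4} = 4) :=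
  stmt_18_general α1 α2 h11 h12 h22
end

section
/- For B_n at p=2, the 2^n vectors Q + (1/2)Σ_{k=1}^n ε_k α_{k…n}^⊖ with ε_k ∈ {±1} all have conformal dimension 0, and they lie in the coset [0] of Λ^⊕ precisely when ∏_k ε_k = +1 and in the coset [α_n/√2] precisely when ∏_k ε_k = −1. -/
open scoped RealInnerProductSpace

section Helpers
variable {V : Type*} [NormedAddCommGroup V] [InnerProductSpace ℝ V]
  {n : ℕ} {α : Fin n → V}
  (hdiag : ∀ i : Fin n, ⟪α i, α i⟫ = if i.val = n - 1 then 2 else 4)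
  (hadj : ∀ i j : Fin n, j.val = i.val + 1 → ⟪α i, α j⟫ = -2)
  (hfar : ∀ i j : Fin n, i.val + 1 < j.val → ⟪α i, α j⟫ = 0)

include hdiag hadj hfar in
lemma stmt19_hG : ∀ j i : Fin n, ⟪α j, α i⟫ =
    (if i = j then (if j.val = n-1 then 2 else 4) else 0) +
    (if i.val = j.val + 1 then -2 else 0) + (if i.val + 1 = j.val then -2 else 0) := by
  intro j i
  by_cases h1 : i = j
  · subst h1
    rw [if_neg (show ¬(i.val = i.val + 1) by omega),
      if_neg (show ¬(i.val + 1 = i.val) by omega), if_pos rfl, hdiag]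
    ring
  · by_cases h2 : i.val = j.val + 1
    · rw [if_neg h1, if_pos h2, if_neg (show ¬(i.val + 1 = j.val) by omega), hadj j i h2]
      ring
    · by_cases h3 : i.val + 1 = j.val
      · rw [if_neg h1, if_neg h2, if_pos h3, real_inner_comm, hadj i j h3.symm]
        ring
      · have hne : i.val ≠ j.val := fun h => h1 (Fin.ext h)
        rcases (by omega : i.val + 1 < j.val ∨ j.val + 1 < i.val) with h | h
        · rw [real_inner_comm, hfar i j h, if_neg h1, if_neg h2, if_neg h3]; ring
        · rw [hfar j i h, if_neg h1, if_neg h2, if_neg h3]; ring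

include hdiag hadj hfar in
lemma stmt19_hS : ∀ k l : Fin n,
    ⟪∑ i ∈ Finset.univ.filter (fun i : Fin n => k ≤ i), α i,
     ∑ i ∈ Finset.univ.filter (fun i : Fin n => l ≤ i), α i⟫ = if k = l then 2 else 0 := by
  intro k l
  rw [sum_inner]
  have inner_step : ∀ j : Fin n,
      ⟪α j, ∑ i ∈ Finset.univ.filter (fun i : Fin n => l ≤ i), α i⟫ =
      (if j = l then 2 else 0) + (if j.val + 1 = l.val then -2 else 0) := by
    intro j
    rw [inner_sum]
    have e1 : ∀ i ∈ Finset.univ.filter (fun i : Fin n => l ≤ i), ⟪α j, α i⟫ =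
        (if i = j then (if j.val = n-1 then 2 else 4) else 0) +
        (if i.val = j.val + 1 then -2 else 0) + (if i.val + 1 = j.val then -2 else 0) :=
      fun i _ => stmt19_hG hdiag hadj hfar j i
    rw [Finset.sum_congr rfl e1, Finset.sum_add_distrib, Finset.sum_add_distrib,
      Finset.sum_ite_eq']
    have e2 : (∑ i ∈ Finset.univ.filter (fun i : Fin n => l ≤ i),
        if i.val = j.val + 1 then (-2:ℝ) else 0) =
        if l.val ≤ j.val + 1 ∧ j.val + 1 < n then -2 else 0 := by
      by_cases hj : j.val + 1 < n
      · have hcond : ∀ i : Fin n, (i.val = j.val + 1) = (i = ⟨j.val+1, hj⟩) := by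
          intro i; simp [Fin.ext_iff]
        simp_rw [hcond]
        rw [Finset.sum_ite_eq']
        simp only [Finset.mem_filter, Finset.mem_univ, true_and, Fin.le_def]
        split_ifs <;> first | (exfalso; omega) | rfl
      · rw [if_neg (by omega)]
        exact Finset.sum_eq_zero fun i _ => if_neg (by omega)
    have e3 : (∑ i ∈ Finset.univ.filter (fun i : Fin n => l ≤ i),
        if i.val + 1 = j.val then (-2:ℝ) else 0) =
        if l.val < j.val then -2 else 0 := by
      by_cases hj : 0 < j.val
      · have hj' : j.val - 1 < n := by omega
        have hcond : ∀ i : Fin n, (i.val + 1 = j.val) = (i = ⟨j.val-1, hj'⟩) := by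
          intro i; simp only [Fin.ext_iff]; simp; omega
        simp_rw [hcond]
        rw [Finset.sum_ite_eq']
        simp only [Finset.mem_filter, Finset.mem_univ, true_and, Fin.le_def]
        split_ifs <;> first | (exfalso; omega) | rfl
      · rw [if_neg (by omega)]
        exact Finset.sum_eq_zero fun i _ => if_neg (by omega)
    rw [e2, e3]
    simp only [Finset.mem_filter, Finset.mem_univ, true_and, Fin.le_def, Fin.ext_iff]
    have hjn : j.val < n := j.isLt
    have hln : l.val < n := l.isLt
    split_ifs <;> first | (exfalso; omega) | norm_num
  rw [Finset.sum_congr rfl (fun j _ => inner_step j), Finset.sum_add_distrib]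
  have e4 : (∑ j ∈ Finset.univ.filter (fun j : Fin n => k ≤ j),
      if j = l then (2:ℝ) else 0) = if k ≤ l then 2 else 0 := by
    rw [Finset.sum_ite_eq']
    simp
  have e5 : (∑ j ∈ Finset.univ.filter (fun j : Fin n => k ≤ j),
      if j.val + 1 = l.val then (-2:ℝ) else 0) = if k.val < l.val then -2 else 0 := by
    by_cases hl : 0 < l.val
    · have hl' : l.val - 1 < n := by omega
      have hcond : ∀ j : Fin n, (j.val + 1 = l.val) = (j = ⟨l.val-1, hl'⟩) := by
        intro j; simp only [Fin.ext_iff]; simp; omega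
      simp_rw [hcond]
      rw [Finset.sum_ite_eq']
      simp only [Finset.mem_filter, Finset.mem_univ, true_and, Fin.le_def]
      split_ifs <;> first | (exfalso; omega) | rfl
    · rw [if_neg (by omega)]
      exact Finset.sum_eq_zero fun j _ => if_neg (by omega)
  rw [e4, e5]
  simp only [Fin.le_def, Fin.ext_iff]
  split_ifs <;> first | (exfalso; omega) | norm_num

end Helpers

lemma stmt19_sumS {V : Type*} [AddCommGroup V] [Module ℝ V] (n : ℕ) (α : Fin n → V) :
    ∑ k : Fin n, (∑ i ∈ Finset.univ.filter (fun i : Fin n => k ≤ i), α i) =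
    ∑ j : Fin n, ((j.val : ℝ) + 1) • α j := by
  simp_rw [Finset.sum_filter]
  rw [Finset.sum_comm]
  refine Finset.sum_congr rfl fun i _ => ?_
  have h1 : (Finset.univ.filter (fun k : Fin n => k ≤ i)) = Finset.Iic i := by
    ext k; simp
  calc (∑ k : Fin n, if k ≤ i then α i else 0)
      = ∑ k ∈ Finset.univ.filter (fun k : Fin n => k ≤ i), α i := (Finset.sum_filter _ _).symm
    _ = (Finset.Iic i).card • α i := by rw [h1, Finset.sum_const]
    _ = ((i.val : ℝ) + 1) • α i := by
        rw [Fin.card_Iic, ← Nat.cast_smul_eq_nsmul ℝ]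
        push_cast
        ring_nf


/-- For `B_n` at `p = 2`: the `2^n` vectors `Q + (1/2)Σ_{k=1}^n ε_k α_{k…n}^⊖` with
`ε_k ∈ {±1}` all have conformal dimension `0`, and they lie in the coset `[0]` of
`Λ^⊕ = √2Λ_R^∨(B_n)` precisely when `∏_k ε_k = +1`, and in the coset `[α_n/√2]`
precisely when `∏_k ε_k = −1`. Here the short screening momenta are
`α_{k…n}^⊖ = −(α_k + … + α_n)/√2` (paper convention `α^⊖ = −α/√p`), the `(α_k+…+α_n)/√2`
being orthonormal, `Q = (1/(2√2))Σ_j j·α_j`, `h(μ) = (1/2)‖μ−Q‖² − (1/2)‖Q‖²`. -/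
theorem stmt_19 {V : Type*} [NormedAddCommGroup V] [InnerProductSpace ℝ V]
    (n : ℕ) (hn : 0 < n) (α : Fin n → V)
    (hdiag : ∀ i : Fin n, ⟪α i, α i⟫ = if i.val = n - 1 then 2 else 4)
    (hadj : ∀ i j : Fin n, j.val = i.val + 1 → ⟪α i, α j⟫ = -2)
    (hfar : ∀ i j : Fin n, i.val + 1 < j.val → ⟪α i, α j⟫ = 0)
    (hlin : LinearIndependent ℝ α) :
    let Q : V := (1/(2 * Real.sqrt 2)) • ∑ j : Fin n, ((j.val : ℝ) + 1) • α j
    let e : Fin n → V := fun k =>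
      -((Real.sqrt 2)⁻¹ • ∑ i ∈ Finset.univ.filter (fun i : Fin n => k ≤ i), α i)
    let L : Submodule ℤ V := Submodule.span ℤ
      (Set.range fun i => Real.sqrt 2 • ((2 / ⟪α i, α i⟫) • α i))
    let h : V → ℝ := fun μ => 1/2 * ⟪μ - Q, μ - Q⟫ - 1/2 * ⟪Q, Q⟫
    ∀ ε : Fin n → ℝ, (∀ k, ε k = 1 ∨ ε k = -1) →
      h (Q + (1/2 : ℝ) • ∑ k, ε k • e k) = 0
      ∧ ((Q + (1/2 : ℝ) • ∑ k, ε k • e k) - 0 ∈ L ↔ ∏ k, ε k = 1)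
      ∧ ((Q + (1/2 : ℝ) • ∑ k, ε k • e k)
            - (Real.sqrt 2)⁻¹ • α ⟨n - 1, Nat.sub_lt hn Nat.one_pos⟩ ∈ L
          ↔ ∏ k, ε k = -1) := by
  intro Q e L h ε hε
  classical
  have sqrt2_pos : (0:ℝ) < Real.sqrt 2 := Real.sqrt_pos.mpr (by norm_num)
  have sqrt2_ne : Real.sqrt 2 ≠ 0 := ne_of_gt sqrt2_pos
  have sq2 : Real.sqrt 2 * Real.sqrt 2 = 2 := Real.mul_self_sqrt (by norm_num)
  set f : Fin n → V := fun k =>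
    (Real.sqrt 2)⁻¹ • ∑ i ∈ Finset.univ.filter (fun i : Fin n => k ≤ i), α i with hf_def
  set lastI : Fin n := ⟨n - 1, Nat.sub_lt hn Nat.one_pos⟩ with hlast_def
  have he : ∀ k, e k = -(f k) := fun k => rfl
  have horth : ∀ k l, ⟪f k, f l⟫ = if k = l then (1:ℝ) else 0 := by
    intro k l
    simp only [hf_def]
    rw [real_inner_smul_left, real_inner_smul_right, stmt19_hS hdiag hadj hfar k l]
    have h2 : (Real.sqrt 2)⁻¹ * (Real.sqrt 2)⁻¹ = 1/2 := by
      rw [← mul_inv, sq2]; norm_num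
    split_ifs
    · rw [show (Real.sqrt 2)⁻¹ * ((Real.sqrt 2)⁻¹ * 2)
          = ((Real.sqrt 2)⁻¹ * (Real.sqrt 2)⁻¹) * 2 by ring, h2]
      norm_num
    · ring
  have hflast : f lastI = (Real.sqrt 2)⁻¹ • α lastI := by
    have hset : Finset.univ.filter (fun i : Fin n => lastI ≤ i) = {lastI} := by
      ext i
      simp only [Finset.mem_filter, Finset.mem_univ, true_and, Finset.mem_singleton,
        Fin.le_def, Fin.ext_iff, hlast_def]
      have := i.isLt
      omega
    simp only [hf_def, hset, Finset.sum_singleton]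
  have hstep : ∀ (k : Fin n) (hk : k.val + 1 < n),
      f k - f ⟨k.val+1, hk⟩ = (Real.sqrt 2)⁻¹ • α k := by
    intro k hk
    simp only [hf_def]
    rw [← smul_sub]
    congr 1
    have hsplit : Finset.univ.filter (fun i : Fin n => k ≤ i)
        = insert k (Finset.univ.filter (fun i : Fin n => (⟨k.val+1, hk⟩ : Fin n) ≤ i)) := by
      ext i
      simp only [Finset.mem_filter, Finset.mem_univ, true_and, Finset.mem_insert,
        Fin.le_def, Fin.ext_iff]
      omega
    rw [hsplit, Finset.sum_insert (by simp [Fin.le_def])]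
    abel
  have hgen1 : ∀ (i : Fin n) (hi : i.val + 1 < n),
      (Real.sqrt 2 • ((2 / ⟪α i, α i⟫) • α i) : V) = f i - f ⟨i.val+1, hi⟩ := by
    intro i hi
    rw [hdiag i, if_neg (by omega), hstep i hi, smul_smul]
    congr 1
    rw [inv_eq_one_div, eq_div_iff sqrt2_ne]
    linear_combination sq2 / 2
  have hgenlast : (Real.sqrt 2 • ((2 / ⟪α lastI, α lastI⟫) • α lastI) : V)
      = (2:ℝ) • f lastI := by
    rw [hdiag lastI, if_pos rfl, hflast, smul_smul, smul_smul]
    congr 1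
    rw [inv_eq_one_div]
    rw [mul_one_div, eq_div_iff sqrt2_ne]
    linear_combination sq2
  have hgen_mem : ∀ i : Fin n, (Real.sqrt 2 • ((2 / ⟪α i, α i⟫) • α i) : V) ∈ L :=
    fun i => Submodule.subset_span ⟨i, rfl⟩
  have htel : ∀ k : Fin n, f k - f lastI ∈ L := by
    suffices H : ∀ d : ℕ, ∀ k : Fin n, n - 1 - k.val = d → f k - f lastI ∈ L from
      fun k => H _ k rfl
    intro d
    induction d with
    | zero =>
      intro k hk
      have hkeq : k = lastI := by
        have := k.isLt
        apply Fin.ext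
        simp only [hlast_def]
        omega
      rw [hkeq, sub_self]
      exact zero_mem L
    | succ d ih =>
      intro k hk
      have hkn : k.val + 1 < n := by omega
      have hsplit : f k - f lastI
          = (f k - f ⟨k.val+1, hkn⟩) + (f ⟨k.val+1, hkn⟩ - f lastI) := by abel
      rw [hsplit]
      exact add_mem (hgen1 k hkn ▸ hgen_mem k) (ih ⟨k.val+1, hkn⟩ (by simp; omega))
  set w : V := ∑ j, f j with hw_def
  have hfw : ∀ k, ⟪f k, w⟫ = 1 := by
    intro k
    rw [hw_def, inner_sum, Finset.sum_congr rfl fun j _ => horth k j, Finset.sum_ite_eq]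
    simp
  have hL2 : ∀ x ∈ L, ∃ d : ℤ, ⟪x, w⟫ = 2 * (d:ℝ) := by
    intro x hx
    induction hx using Submodule.span_induction with
    | mem x hxs =>
      obtain ⟨i, rfl⟩ := hxs
      show ∃ d : ℤ, ⟪(Real.sqrt 2 • ((2 / ⟪α i, α i⟫) • α i) : V), w⟫ = 2 * (d:ℝ)
      by_cases hi : i.val + 1 < n
      · refine ⟨0, ?_⟩
        rw [hgen1 i hi, inner_sub_left, hfw, hfw]
        norm_num
      · have hieq : i = lastI := by
          have := i.isLt
          apply Fin.ext
          simp only [hlast_def]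
          omega
        refine ⟨1, ?_⟩
        rw [hieq, hgenlast, real_inner_smul_left, hfw]
        norm_num
    | zero => exact ⟨0, by simp⟩
    | add x y hx hy ihx ihy =>
      obtain ⟨d1, h1⟩ := ihx
      obtain ⟨d2, h2⟩ := ihy
      exact ⟨d1 + d2, by rw [inner_add_left, h1, h2]; push_cast; ring⟩
    | smul a x hx ihx =>
      obtain ⟨d, hd⟩ := ihx
      refine ⟨a * d, ?_⟩
      rw [← Int.cast_smul_eq_zsmul ℝ a x, real_inner_smul_left, hd]
      push_cast
      ring
  have hmemL : ∀ c : Fin n → ℤ, ((∑ k, ((c k : ℤ):ℝ) • f k) ∈ L ↔ Even (∑ k, c k)) := by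
    intro c
    constructor
    · intro hmem
      obtain ⟨d, hd⟩ := hL2 _ hmem
      have hcalc : ⟪∑ k, ((c k : ℤ):ℝ) • f k, w⟫ = ((∑ k, c k : ℤ) : ℝ) := by
        rw [sum_inner]
        simp_rw [real_inner_smul_left, hfw, mul_one]
        push_cast
        rfl
      rw [hcalc] at hd
      have hc : (∑ k, c k) = 2 * d := by exact_mod_cast hd
      exact ⟨d, by omega⟩
    · intro heven
      obtain ⟨d, hd⟩ := heven
      have hsplit : (∑ k, ((c k : ℤ):ℝ) • f k)
          = (∑ k, ((c k : ℤ):ℝ) • (f k - f lastI)) + ((∑ k, c k : ℤ) : ℝ) • f lastI := by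
        have hterm : ∀ k : Fin n, ((c k : ℤ):ℝ) • f k
            = ((c k : ℤ):ℝ) • (f k - f lastI) + ((c k : ℤ):ℝ) • f lastI := by
          intro k; rw [smul_sub]; abel
        rw [Finset.sum_congr rfl fun k _ => hterm k, Finset.sum_add_distrib]
        congr 1
        rw [← Finset.sum_smul]
        congr 1
        push_cast
        rfl
      rw [hsplit]
      refine add_mem (Submodule.sum_mem _ fun k _ => ?_) ?_
      · rw [Int.cast_smul_eq_zsmul]
        exact Submodule.smul_mem _ _ (htel k)
      · have heq : ((∑ k, c k : ℤ) : ℝ) • f lastI = d • ((2:ℝ) • f lastI) := by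
          have h1 : ∀ x : V, ((d + d : ℤ) : ℝ) • x = d • ((2:ℝ) • x) := by
            intro x
            rw [← Int.cast_smul_eq_zsmul ℝ d, smul_smul,
              show ((d + d : ℤ) : ℝ) = (d:ℝ) * 2 by push_cast; ring]
          rw [hd]
          exact h1 _
        rw [heq]
        exact Submodule.smul_mem _ d (hgenlast ▸ hgen_mem lastI)
  set mN : Fin n → ℕ := fun k => if ε k = 1 then 0 else 1 with hm_def
  have hmval : ∀ k, (ε k = 1 ∧ mN k = 0) ∨ (ε k = -1 ∧ mN k = 1) := by
    intro k
    rcases hε k with h1 | h1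
    · exact Or.inl ⟨h1, by simp [hm_def, h1]⟩
    · have hne : ε k ≠ 1 := by rw [h1]; norm_num
      exact Or.inr ⟨h1, by simp [hm_def, hne]⟩
  have hε2 : ∀ k, ε k = 1 - 2 * ((mN k : ℕ):ℝ) := by
    intro k
    rcases hmval k with ⟨h1, h2⟩ | ⟨h1, h2⟩ <;> rw [h1, h2] <;> norm_num
  have hεpow : ∀ k, ε k = (-1:ℝ) ^ (mN k) := by
    intro k
    rcases hmval k with ⟨h1, h2⟩ | ⟨h1, h2⟩ <;> rw [h1, h2] <;> norm_num
  have hprod : ∏ k, ε k = (-1:ℝ) ^ (∑ k, mN k) := by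
    rw [Finset.prod_congr rfl fun k _ => hεpow k, Finset.prod_pow_eq_pow_sum]
  have hQf : Q = ∑ k, (1/2:ℝ) • f k := by
    show (1/(2 * Real.sqrt 2)) • ∑ j : Fin n, ((j.val : ℝ) + 1) • α j = _
    rw [← stmt19_sumS n α]
    simp only [hf_def]
    rw [Finset.smul_sum]
    refine Finset.sum_congr rfl fun k _ => ?_
    rw [smul_smul]
    congr 1
    rw [one_div, mul_inv]
    ring
  have hμ : Q + (1/2 : ℝ) • ∑ k, ε k • e k = ∑ k, (((mN k : ℤ)):ℝ) • f k := by
    rw [hQf, Finset.smul_sum, ← Finset.sum_add_distrib]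
    refine Finset.sum_congr rfl fun k _ => ?_
    rw [he k, hε2 k]
    push_cast
    module
  have hμQ : (Q + (1/2 : ℝ) • ∑ k, ε k • e k) - Q = ∑ k, (-(ε k)/2) • f k := by
    rw [add_sub_cancel_left, Finset.smul_sum]
    refine Finset.sum_congr rfl fun k _ => ?_
    rw [he k]
    module
  have hinner : ∀ a : Fin n → ℝ, ⟪∑ k, a k • f k, ∑ k, a k • f k⟫ = ∑ k, a k * a k := by
    intro a
    rw [sum_inner]
    refine Finset.sum_congr rfl fun k _ => ?_
    rw [real_inner_smul_left, inner_sum]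
    have hterm : ∀ j : Fin n, ⟪f k, a j • f j⟫ = if k = j then a j else 0 := by
      intro j
      rw [real_inner_smul_right, horth k j]
      split_ifs <;> ring
    rw [Finset.sum_congr rfl fun j _ => hterm j, Finset.sum_ite_eq]
    simp
  have hQQ : ⟪Q, Q⟫ = ∑ _k : Fin n, (1/4:ℝ) := by
    rw [hQf, hinner (fun _ => 1/2)]
    norm_num
  have hzero : h (Q + (1/2 : ℝ) • ∑ k, ε k • e k) = 0 := by
    show 1/2 * ⟪_ - Q, _ - Q⟫ - 1/2 * ⟪Q, Q⟫ = 0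
    rw [hμQ, hinner (fun k => -(ε k)/2), hQQ]
    rw [Finset.sum_congr rfl fun k _ =>
      (by rcases hε k with h1 | h1 <;> rw [h1] <;> norm_num : -(ε k)/2 * (-(ε k)/2) = 1/4)]
    ring
  refine ⟨hzero, ?_, ?_⟩
  · rw [sub_zero, hμ, hmemL (fun k => (mN k : ℤ)), hprod]
    rw [← Nat.cast_sum, Int.even_coe_nat]
    exact (neg_one_pow_eq_one_iff_even (by norm_num : (-1:ℝ) ≠ 1)).symm
  · set c2 : Fin n → ℤ := fun k => (mN k : ℤ) - (if k = lastI then 1 else 0) with hc2_def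
    have hsum1 : ∑ k, (if k = lastI then (1:ℝ) else 0) • f k = f lastI := by
      simp_rw [ite_smul, one_smul, zero_smul]
      rw [Finset.sum_ite_eq']
      simp
    have hvec : (Q + (1/2 : ℝ) • ∑ k, ε k • e k) - (Real.sqrt 2)⁻¹ • α lastI
        = ∑ k, ((c2 k : ℤ):ℝ) • f k := by
      rw [hμ, ← hflast, ← hsum1, ← Finset.sum_sub_distrib]
      refine Finset.sum_congr rfl fun k _ => ?_
      rw [← sub_smul]
      congr 1
      simp only [hc2_def]
      push_cast
      split_ifs <;> norm_num
    rw [hvec, hmemL c2]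
    have hsumc2 : ∑ k, c2 k = (∑ k, (mN k:ℤ)) - 1 := by
      simp only [hc2_def]
      rw [Finset.sum_sub_distrib]
      congr 1
      rw [Finset.sum_ite_eq']
      simp
    rw [hsumc2, hprod]
    have hNodd : Even ((∑ k, (mN k:ℤ)) - 1) ↔ Odd (∑ k, mN k) := by
      rw [← Nat.cast_sum, Int.even_sub_one, Int.even_coe_nat, Nat.not_even_iff_odd]
    rw [hNodd]
    constructor
    · intro hodd
      rw [hodd.neg_one_pow]
    · intro hpow
      rcases Nat.even_or_odd (∑ k, mN k) with hev | hodd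
      · rw [hev.neg_one_pow] at hpow
        norm_num at hpow
      · exact hodd
end
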